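/- arXiv:2505.19499 — 3 statements merged into one kernel-verified Lean document; each statement's English description precedes it below -/
import Mathlib

section
/- Let (V; f, g) be a dual-modular instance and θ : ℝ≥0 → ℝ a strictly convex function. An allocation (x, y) ∈ B≥_f × B≤_g minimizes D_θ(x ‖ y) over all allocations if and only if it is locally maximin. Moreover, if θ is merely convex (not necessarily strictly), every locally maximin allocation is still a minimizer of D_θ over all allocations. -/
open Finset

variable {V : Type*} [Fintype V] [DecidableEq V]

/-- A set function is supermodular. -/
def Supermodular (f : Finset V → ℝ) : Prop :=
  ∀ A B : Finset V, f A + f B ≤ f (A ∩ B) + f (A ∪ B)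

/-- A set function is submodular. -/
def Submodular (g : Finset V → ℝ) : Prop :=
  ∀ A B : Finset V, g (A ∩ B) + g (A ∪ B) ≤ g A + g B

/-- A set function is monotone. -/
def MonotoneFn (f : Finset V → ℝ) : Prop :=
  ∀ A B : Finset V, A ⊆ B → f A ≤ f B

/-- A set function is strictly monotone. -/
def StrictMonoFn (g : Finset V → ℝ) : Prop :=
  ∀ A B : Finset V, A ⊂ B → g A < g B

/-- A dual-modular instance `(V; f, g)`: `f` is a nonnegative monotone supermodular
reward function, `g` is a nonnegative strictly monotone submodular cost function,
both vanishing on the empty set. -/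
structure DualModular (f g : Finset V → ℝ) : Prop where
  f_nonneg : ∀ A, 0 ≤ f A
  g_nonneg : ∀ A, 0 ≤ g A
  f_empty : f ∅ = 0
  g_empty : g ∅ = 0
  f_mono : MonotoneFn f
  g_strictMono : StrictMonoFn g
  f_supermodular : Supermodular f
  g_submodular : Submodular g

/-- Density of a subset. -/
noncomputable def density (f g : Finset V → ℝ) (S : Finset V) : ℝ := f S / g S

/-- Marginal contribution `h(S|A) = h(S ∪ A) - h(A)`. -/
def marginal (h : Finset V → ℝ) (S A : Finset V) : ℝ := h (S ∪ A) - h A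

/-- Marginal density `ρ(S|A) = f(S|A)/g(S|A)`. -/
noncomputable def margDensity (f g : Finset V → ℝ) (S A : Finset V) : ℝ :=
  marginal f S A / marginal g S A

/-- `S_{<i}`: the union of earlier parts in an indexed family. -/
def below {k : ℕ} (S : Fin k → Finset V) (i : Fin k) : Finset V :=
  (Finset.univ.filter (fun j => j < i)).biUnion S

/-- The density decomposition `V = S₁ ∪ … ∪ S_k`: each `S i` is a nonempty maximal
densest subset of the remaining instance with marginal functions. -/
structure IsDensityDecomposition (f g : Finset V → ℝ) {k : ℕ} (S : Fin k → Finset V) :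
    Prop where
  nonempty : ∀ i, (S i).Nonempty
  disj : ∀ i, Disjoint (S i) (below S i)
  cover : Finset.univ.biUnion S = (Finset.univ : Finset V)
  maxDensity : ∀ i, ∀ T : Finset V, T.Nonempty → Disjoint T (below S i) →
    margDensity f g T (below S i) ≤ margDensity f g (S i) (below S i)
  maximal : ∀ i, ∀ T : Finset V, T.Nonempty → Disjoint T (below S i) →
    margDensity f g (S i) (below S i) ≤ margDensity f g T (below S i) → T ⊆ S i

/-- `ρ_i`, the density of the `i`-th component of the decomposition. -/
noncomputable def decompDensity (f g : Finset V → ℝ) {k : ℕ} (S : Fin k → Finset V)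
    (i : Fin k) : ℝ :=
  margDensity f g (S i) (below S i)

/-- Membership in the base contrapolymatroid `B≥_f`. -/
def memBf (f : Finset V → ℝ) (x : V → ℝ) : Prop :=
  (∀ v, 0 ≤ x v) ∧ (∑ v, x v = f Finset.univ) ∧ ∀ A : Finset V, f A ≤ ∑ v ∈ A, x v

/-- Membership in the base polymatroid `B≤_g`. -/
def memBg (g : Finset V → ℝ) (y : V → ℝ) : Prop :=
  (∀ v, 0 ≤ y v) ∧ (∑ v, y v = g Finset.univ) ∧ ∀ A : Finset V, ∑ v ∈ A, y v ≤ g A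

/-- An allocation is a pair `(x, y) ∈ B≥_f × B≤_g`. -/
def Allocation (f g : Finset V → ℝ) (x y : V → ℝ) : Prop := memBf f x ∧ memBg g y

/-- The locally maximin condition for an allocation. -/
def LocallyMaximin (f g : Finset V → ℝ) (x y : V → ℝ) : Prop :=
  ∀ ρ : ℝ, 0 < ρ →
    (∑ v ∈ Finset.univ.filter (fun v => ρ ≤ x v / y v), x v
       = f (Finset.univ.filter (fun v => ρ ≤ x v / y v))) ∧
    (∑ v ∈ Finset.univ.filter (fun v => ρ ≤ x v / y v), y v
       = g (Finset.univ.filter (fun v => ρ ≤ x v / y v)))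

/-- The multiset of induced densities, sorted in non-increasing order. -/
noncomputable def sortedDensities (x y : V → ℝ) : List ℝ :=
  ((Finset.univ.val.map (fun v => x v / y v)).sort (· ≤ ·)).reverse

/-- An allocation is lexicographically optimal if its non-increasingly sorted density
vector is lexicographically minimal among all allocations. -/
def LexOptimal (f g : Finset V → ℝ) (x y : V → ℝ) : Prop :=
  Allocation f g x y ∧
  ∀ x' y' : V → ℝ, Allocation f g x' y' → sortedDensities x y ≤ sortedDensities x' y'

/-- The hockey-stick divergence `HS_γ(x ‖ y)`. -/
noncomputable def HS (γ : ℝ) (x y : V → ℝ) : ℝ := ∑ u, max (x u - γ * y u) 0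

/-- The `θ`-divergence `D_θ(x ‖ y) = Σ_u y_u · θ(x_u / y_u)`. -/
noncomputable def Dtheta (θ : ℝ → ℝ) (x y : V → ℝ) : ℝ := ∑ u, y u * θ (x u / y u)

/-- Permutations of `V`, encoded as bijections to positions `Fin |V|`;
`u ≺_σ v` iff `σ u < σ v`. -/
abbrev Perms (V : Type*) [Fintype V] := V ≃ Fin (Fintype.card V)

/-- `h^σ(u)`: the marginal contribution of `u` given the elements preceding it in `σ`. -/
def permVal (h : Finset V → ℝ) (σ : Perms V) (u : V) : ℝ :=
  h (insert u (Finset.univ.filter (fun w => σ w < σ u))) -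
    h (Finset.univ.filter (fun w => σ w < σ u))

/-- A probability distribution on permutations of `V`. -/
def IsDist (p : Perms V → ℝ) : Prop := (∀ σ, 0 ≤ p σ) ∧ ∑ σ, p σ = 1

/-- `h^p(u) = Σ_σ p_σ · h^σ(u)`. -/
noncomputable def distVal (h : Finset V → ℝ) (p : Perms V → ℝ) (u : V) : ℝ :=
  ∑ σ, p σ * permVal h σ u

/-- The density induced by a solution `(p, q)`. -/
noncomputable def solDensity (f g : Finset V → ℝ) (p q : Perms V → ℝ) (v : V) : ℝ :=
  distVal f p v / distVal g q v

/-- A solution `(p, q)` is locally maximin if whenever `u` has strictly larger induced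
density than `v`, every permutation with positive weight puts `u` before `v`. -/
def LocallyMaximinSol (f g : Finset V → ℝ) (p q : Perms V → ℝ) : Prop :=
  ∀ u v : V, solDensity f g p q v < solDensity f g p q u →
    ∀ σ : Perms V, (0 < p σ ∨ 0 < q σ) → σ u < σ v

/-- The convex-program objective `Φ_θ(p, q) = D_θ(f^p ‖ g^q)`. -/
noncomputable def Phi (θ : ℝ → ℝ) (f g : Finset V → ℝ) (p q : Perms V → ℝ) : ℝ :=
  Dtheta θ (distVal f p) (distVal g q)

/-!
Both directions compare divergences through the hockey-stick divergences `HS γ`.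

If `(x, y)` is locally maximin, the level set `S = {v | γ ≤ ρ_v}` is tight for `x` and for `y`,
so `HS γ x y = f S - γ g S`, a lower bound for `HS γ x' y'` at every allocation `(x', y')`.
On a grid `0 = t₀ < ⋯ < t_m` containing the densities of both allocations, `D_θ` is `θ 0 · Σ y`
plus a combination of the `HS t_j`; after summation by parts the coefficients become the increments
of consecutive secant slopes of `θ`, which are nonnegative when `θ` is convex.

Conversely, suppose a level set `S` of a minimizer is not tight, say for `x`. Tight sets form a
lattice containing `∅` and `V`, so some `u ∈ S` and `v ∉ S` are separated by no tight set, and a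
small mass can be moved from `x_u` to `x_v` inside `B≥_f`. As `ρ_v < ρ_u`, strict convexity of `θ`
makes `D_θ` decrease strictly. For `y` the mass moves from `y_v` to `y_u` instead.
-/

open Filter Topology

section Slope

variable {𝕜 : Type*} [Field 𝕜] [LinearOrder 𝕜] [IsStrictOrderedRing 𝕜] {s : Set 𝕜} {f : 𝕜 → 𝕜}
  {a b c d x : 𝕜}

theorem StrictConvexOn.slope_strictMonoOn (hf : StrictConvexOn 𝕜 s f) (hx : x ∈ s) :
    StrictMonoOn (slope f x) (s \ {x}) := by
  intro y hy z hz hyz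
  simp only [slope_fun_def_field]
  exact hf.secant_strict_mono hx hy.1 hz.1 hy.2 hz.2 hyz

theorem ConvexOn.slope_le_slope (hf : ConvexOn 𝕜 s f) (ha : a ∈ s) (hd : d ∈ s) (hab : a < b)
    (hbc : b ≤ c) (hcd : c < d) : slope f a b ≤ slope f c d := by
  have hb : b ∈ s := hf.1.ordConnected.out ha hd ⟨hab.le, hbc.trans hcd.le⟩
  have hc : c ∈ s := hf.1.ordConnected.out ha hd ⟨(hab.trans_le hbc).le, hcd.le⟩
  calc slope f a b ≤ slope f a c :=
        hf.slope_mono ha ⟨hb, hab.ne'⟩ ⟨hc, (hab.trans_le hbc).ne'⟩ hbc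
    _ = slope f c a := slope_comm f a c
    _ ≤ slope f c d :=
        hf.slope_mono hc ⟨ha, (hab.trans_le hbc).ne⟩ ⟨hd, hcd.ne'⟩
          (hab.trans_le hbc |>.trans hcd).le

theorem StrictConvexOn.slope_lt_slope (hf : StrictConvexOn 𝕜 s f) (ha : a ∈ s) (hd : d ∈ s)
    (hab : a < b) (hbc : b ≤ c) (hcd : c < d) : slope f a b < slope f c d := by
  have hb : b ∈ s := hf.1.ordConnected.out ha hd ⟨hab.le, hbc.trans hcd.le⟩
  have hc : c ∈ s := hf.1.ordConnected.out ha hd ⟨(hab.trans_le hbc).le, hcd.le⟩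
  calc slope f a b ≤ slope f a c :=
        hf.convexOn.slope_mono ha ⟨hb, hab.ne'⟩ ⟨hc, (hab.trans_le hbc).ne'⟩ hbc
    _ = slope f c a := slope_comm f a c
    _ < slope f c d :=
        hf.slope_strictMonoOn hc ⟨ha, (hab.trans_le hbc).ne⟩ ⟨hd, hcd.ne'⟩
          (hab.trans_le hbc |>.trans hcd)

end Slope

noncomputable def perspective (θ : ℝ → ℝ) (a b : ℝ) : ℝ := b * θ (a / b)

section Perspective

variable {θ : ℝ → ℝ} {a a' b b' δ : ℝ}

theorem perspective_sub_perspective_num (θ : ℝ → ℝ) (hb : b ≠ 0) :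
    perspective θ a' b - perspective θ a b = (a' - a) * slope θ (a / b) (a' / b) := by
  have h := sub_smul_slope θ (a / b) (a' / b)
  rw [smul_eq_mul, vsub_eq_sub] at h
  rw [perspective, perspective, ← mul_sub, ← h, ← mul_assoc, ← sub_div, mul_div_cancel₀ _ hb]

theorem perspective_sub_perspective_den (θ : ℝ → ℝ) (hb : b ≠ 0) (hb' : b' ≠ 0) :
    perspective θ a b' - perspective θ a b =
      (b' - b) * (θ (a / b) - a / b * slope θ (a / b') (a / b)) := by
  have h := sub_smul_slope θ (a / b') (a / b)
  rw [smul_eq_mul, vsub_eq_sub] at h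
  rw [perspective, perspective]
  linear_combination b' * h - slope θ (a / b') (a / b) * mul_div_cancel₀ a hb +
    slope θ (a / b') (a / b) * mul_div_cancel₀ a hb'

theorem StrictConvexOn.perspective_transfer_num_lt (hθ : StrictConvexOn ℝ (Set.Ici 0) θ)
    (hb : 0 < b) (hb' : 0 < b') (ha' : 0 ≤ a') (hδ : 0 < δ) (hle : (a' + δ) / b' ≤ (a - δ) / b) :
    perspective θ (a - δ) b + perspective θ (a' + δ) b' <
      perspective θ a b + perspective θ a' b' := by
  have hu := perspective_sub_perspective_num θ (a := a - δ) (a' := a) hb.ne'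
  have hv := perspective_sub_perspective_num θ (a := a') (a' := a' + δ) hb'.ne'
  have hc : 0 ≤ a' / b' := by positivity
  have hcd : a' / b' < (a' + δ) / b' := div_lt_div_of_pos_right (by linarith) hb'
  have hpq : (a - δ) / b < a / b := div_lt_div_of_pos_right (by linarith) hb
  have hslope : slope θ (a' / b') ((a' + δ) / b') < slope θ ((a - δ) / b) (a / b) :=
    hθ.slope_lt_slope hc (by linarith : (0 : ℝ) ≤ a / b) hcd hle hpq
  nlinarith

theorem StrictConvexOn.perspective_transfer_den_lt (hθ : StrictConvexOn ℝ (Set.Ici 0) θ)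
    (ha : 0 < a) (ha' : 0 ≤ a') (hb : 0 < b) (hδ : 0 < δ) (hδb' : δ < b')
    (hle : a' / (b' - δ) ≤ a / (b + δ)) :
    perspective θ a (b + δ) + perspective θ a' (b' - δ) <
      perspective θ a b + perspective θ a' b' := by
  have hu := perspective_sub_perspective_den θ (a := a) (b' := b + δ) hb.ne' (by linarith)
  have hv := perspective_sub_perspective_den θ (a := a') (b := b') (b' := b' - δ) (by linarith)
    (by linarith)
  set p := a / (b + δ)
  set q := a / b
  set c := a' / b'
  set d := a' / (b' - δ)
  have hp : 0 < p := by positivity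
  have hpq : p < q := div_lt_div_of_pos_left ha hb (by linarith)
  have hc : 0 ≤ c := div_nonneg ha' (by linarith)
  have hcd : c ≤ d := div_le_div_of_nonneg_left ha' (by linarith) (by linarith)
  -- if `a' = 0` then `c = d = 0` and the secant through `d` and `c` degenerates
  obtain ⟨hcp, hcs⟩ : c < p ∧ c * slope θ d c ≤ c * slope θ p q := by
    rcases ha'.eq_or_lt with rfl | ha'
    · simp [c, hp]
    have hcd : c < d := div_lt_div_of_pos_left ha' (by linarith) (by linarith)
    refine ⟨hcd.trans_le hle, mul_le_mul_of_nonneg_left ?_ hc⟩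
    rw [slope_comm]
    exact hθ.convexOn.slope_le_slope hc (hp.le.trans hpq.le) hcd hle hpq
  have hslope : slope θ c q < slope θ p q := by
    rw [slope_comm θ c, slope_comm θ p]
    exact hθ.slope_strictMonoOn (hp.le.trans hpq.le) ⟨hc, (hcp.trans hpq).ne⟩
      ⟨hp.le, hpq.ne⟩ hcp
  have hsec := sub_smul_slope θ c q
  rw [smul_eq_mul, vsub_eq_sub] at hsec
  have key : θ q - q * slope θ p q < θ c - c * slope θ d c := by
    nlinarith [mul_lt_mul_of_pos_left hslope (sub_pos.2 (hcp.trans hpq))]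
  nlinarith [mul_lt_mul_of_pos_left key hδ]

end Perspective

theorem pos_of_memBg {g : Finset V → ℝ} {y : V → ℝ} (hg : StrictMonoFn g) (hy : memBg g y)
    (v : V) : 0 < y v := by
  have hlt := hg _ _ (erase_ssubset (mem_univ v))
  have := hy.2.2 (univ.erase v)
  rw [← hy.2.1, ← sum_erase_add _ _ (mem_univ v)] at hlt
  linarith

section HockeyStick

variable {ι : Type*} [Fintype ι] {x y : ι → ℝ} {γ : ℝ}

theorem HS_zero (hx : ∀ u, 0 ≤ x u) : HS 0 x y = ∑ u, x u := by
  simp only [HS, zero_mul, sub_zero]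
  exact sum_congr rfl fun u _ => max_eq_left (hx u)

theorem HS_eq_zero (hy : ∀ u, 0 < y u) (hγ : ∀ u, x u / y u ≤ γ) : HS γ x y = 0 :=
  sum_eq_zero fun u _ => max_eq_right (by linarith [(div_le_iff₀ (hy u)).1 (hγ u)])

theorem sub_mul_le_HS {f g : Finset ι → ℝ} (hxy : Allocation f g x y) (hγ : 0 ≤ γ)
    (S : Finset ι) : f S - γ * g S ≤ HS γ x y :=
  calc f S - γ * g S ≤ ∑ u ∈ S, x u - γ * ∑ u ∈ S, y u := by
        gcongr
        exacts [hxy.1.2.2 S, hxy.2.2.2 S]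
    _ = ∑ u ∈ S, (x u - γ * y u) := by rw [sum_sub_distrib, mul_sum]
    _ ≤ ∑ u ∈ S, max (x u - γ * y u) 0 := sum_le_sum fun u _ => le_max_left _ _
    _ ≤ HS γ x y :=
        sum_le_sum_of_subset_of_nonneg (subset_univ S) fun u _ _ => le_max_right _ _

theorem LocallyMaximin.HS_eq {f g : Finset ι → ℝ} (hlm : LocallyMaximin f g x y)
    (hy : ∀ u, 0 < y u) (hγ : 0 < γ) :
    HS γ x y = f (univ.filter fun v => γ ≤ x v / y v) -
      γ * g (univ.filter fun v => γ ≤ x v / y v) := by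
  rw [← (hlm γ hγ).1, ← (hlm γ hγ).2, mul_sum, ← sum_sub_distrib, sum_filter, HS]
  refine sum_congr rfl fun u _ => ?_
  split_ifs with h
  · exact max_eq_left (by linarith [(le_div_iff₀ (hy u)).1 h])
  · exact max_eq_right (by linarith [(div_lt_iff₀ (hy u)).1 (not_le.1 h)])

end HockeyStick

theorem Finset.exists_strictMonoOn_Iic_bijOn {α : Type*} [LinearOrder α] (K : Finset α)
    (hK : K.Nonempty) :
    ∃ (t : ℕ → α) (m : ℕ), StrictMonoOn t (Set.Iic m) ∧ Set.BijOn t (Set.Iic m) K := by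
  have hcard := hK.card_pos
  let t : ℕ → α := fun j => K.orderEmbOfFin rfl ⟨min j (#K - 1), by omega⟩
  have hmono : StrictMonoOn t (Set.Iic (#K - 1)) := fun i hi j hj hij => by
    simp only [Set.mem_Iic] at hi hj
    exact (K.orderEmbOfFin rfl).strictMono (Fin.mk_lt_mk.2 (by omega))
  refine ⟨t, #K - 1, hmono, fun j _ => K.orderEmbOfFin_mem rfl _, hmono.injOn, fun k hk => ?_⟩
  obtain ⟨⟨i, hi⟩, rfl⟩ : k ∈ Set.range (K.orderEmbOfFin rfl) := by
    rwa [Finset.range_orderEmbOfFin]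
  exact ⟨i, Set.mem_Iic.2 (by omega), by simp only [t, min_eq_left (by omega : i ≤ #K - 1)]⟩

theorem eq_add_sum_slope_mul_hinge (θ : ℝ → ℝ) {t : ℕ → ℝ} {m l : ℕ}
    (ht : MonotoneOn t (Set.Iic m)) (hl : l ≤ m) :
    θ (t l) = θ (t 0) + ∑ j ∈ range m,
      slope θ (t j) (t (j + 1)) * (max (t l - t j) 0 - max (t l - t (j + 1)) 0) := by
  have hle : ∀ i k, i ≤ k → k ≤ m → t i ≤ t k := fun i k hik hk =>
    ht (Set.mem_Iic.2 (hik.trans hk)) (Set.mem_Iic.2 hk) hik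
  have hterm : ∀ j ∈ range m, slope θ (t j) (t (j + 1)) *
      (max (t l - t j) 0 - max (t l - t (j + 1)) 0) = θ (t (min (j + 1) l)) - θ (t (min j l)) := by
    intro j hj
    rw [mem_range] at hj
    rcases lt_or_ge j l with hjl | hlj
    · have hsec := sub_smul_slope θ (t j) (t (j + 1))
      rw [smul_eq_mul, vsub_eq_sub] at hsec
      rw [min_eq_left (by omega), min_eq_left hjl.le,
        max_eq_left (sub_nonneg.2 (hle j l hjl.le hl)), max_eq_left (sub_nonneg.2 (hle _ l hjl hl))]
      linear_combination hsec
    · rw [min_eq_right (by omega), min_eq_right hlj,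
        max_eq_right (sub_nonpos.2 (hle l j hlj hj.le)),
        max_eq_right (sub_nonpos.2 (hle l _ (by omega) hj)), sub_self, mul_zero, sub_self]
  rw [sum_congr rfl hterm, sum_range_sub (fun j => θ (t (min j l))), min_eq_right hl,
    Nat.zero_min]
  ring

theorem Dtheta_eq_add_sum_slope_mul_HS {ι : Type*} [Fintype ι] (θ : ℝ → ℝ) {x y : ι → ℝ}
    {t : ℕ → ℝ} {m : ℕ} (ht : MonotoneOn t (Set.Iic m)) (hy : ∀ u, 0 < y u)
    (hgrid : ∀ u, ∃ l ≤ m, t l = x u / y u) :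
    Dtheta θ x y = θ (t 0) * ∑ u, y u +
      ∑ j ∈ range m, slope θ (t j) (t (j + 1)) * (HS (t j) x y - HS (t (j + 1)) x y) := by
  have hu : ∀ u, y u * θ (x u / y u) = θ (t 0) * y u + ∑ j ∈ range m,
      slope θ (t j) (t (j + 1)) * (max (x u - t j * y u) 0 - max (x u - t (j + 1) * y u) 0) :=
    fun u => by
    obtain ⟨l, hl, hlu⟩ := hgrid u
    have hhinge : ∀ γ, max (x u - γ * y u) 0 = y u * max (t l - γ) 0 := fun γ => by
      rw [mul_max_of_nonneg _ _ (hy u).le, mul_zero, hlu, mul_sub, mul_div_cancel₀ _ (hy u).ne',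
        mul_comm]
    simp only [hhinge]
    rw [← hlu, eq_add_sum_slope_mul_hinge θ ht hl, mul_add, mul_sum, mul_comm]
    congr 1
    exact sum_congr rfl fun j _ => by ring
  rw [Dtheta, sum_congr rfl fun u _ => hu u, sum_add_distrib, ← mul_sum, sum_comm]
  congr 1
  exact sum_congr rfl fun j _ => by rw [← mul_sum, HS, HS, ← sum_sub_distrib]

theorem sum_range_mul_sub_succ_nonpos {s Δ : ℕ → ℝ} {m : ℕ}
    (hs : ∀ j, j + 1 < m → s j ≤ s (j + 1)) (h0 : Δ 0 = 0) (hm : Δ m = 0)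
    (hΔ : ∀ j ≤ m, Δ j ≤ 0) : ∑ j ∈ range m, s j * (Δ j - Δ (j + 1)) ≤ 0 := by
  have h := sum_range_by_parts s (fun j => Δ j - Δ (j + 1)) m
  simp only [smul_eq_mul, sum_range_sub', h0, hm, sub_self, mul_zero, zero_sub, zero_sub] at h
  rw [h, neg_nonpos]
  refine sum_nonneg fun j hj => mul_nonneg (sub_nonneg.2 (hs j ?_)) (neg_nonneg.2 (hΔ _ ?_)) <;>
    simp only [mem_range] at hj <;> omega

theorem ConvexOn.Dtheta_le_of_HS_le_of_grid {ι : Type*} [Fintype ι] {θ : ℝ → ℝ}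
    (hθ : ConvexOn ℝ (Set.Ici 0) θ) {x y x' y' : ι → ℝ} {t : ℕ → ℝ} {m : ℕ}
    (ht : StrictMonoOn t (Set.Iic m)) (ht0 : t 0 = 0) (hgrid : ∀ u, ∃ l ≤ m, t l = x u / y u)
    (hgrid' : ∀ u, ∃ l ≤ m, t l = x' u / y' u) (hy : ∀ u, 0 < y u) (hy' : ∀ u, 0 < y' u)
    (hsumy : ∑ u, y u = ∑ u, y' u) (hHS0 : HS 0 x y = HS 0 x' y')
    (hHS : ∀ γ, 0 < γ → HS γ x y ≤ HS γ x' y') : Dtheta θ x y ≤ Dtheta θ x' y' := by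
  have hIic : ∀ {j}, j ≤ m → j ∈ Set.Iic m := Set.mem_Iic.2
  have htm : ∀ l ≤ m, t l ≤ t m := fun l hl => ht.monotoneOn (hIic hl) Set.self_mem_Iic hl
  have htpos : ∀ j ≤ m, 0 < j → 0 < t j := fun j hj hj0 =>
    ht0 ▸ ht (hIic (Nat.zero_le m)) (hIic hj) hj0
  rw [← sub_nonpos, Dtheta_eq_add_sum_slope_mul_HS θ ht.monotoneOn hy hgrid,
    Dtheta_eq_add_sum_slope_mul_HS θ ht.monotoneOn hy' hgrid', hsumy, add_sub_add_left_eq_sub,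
    ← sum_sub_distrib]
  convert sum_range_mul_sub_succ_nonpos (s := fun j => slope θ (t j) (t (j + 1)))
    (Δ := fun j => HS (t j) x y - HS (t j) x' y') (m := m) ?_ ?_ ?_ ?_ using 2 with j
  · ring
  · intro j hj
    have hnonneg : ∀ i ≤ m, 0 ≤ t i := fun i hi =>
      ht0 ▸ ht.monotoneOn (hIic (Nat.zero_le m)) (hIic hi) (Nat.zero_le i)
    exact hθ.slope_le_slope (hnonneg j (by omega)) (hnonneg (j + 2) (by omega))
      (ht (hIic (by omega)) (hIic (by omega)) (by omega)) le_rfl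
      (ht (hIic (by omega)) (hIic (by omega)) (by omega))
  · simp only [ht0, hHS0, sub_self]
  · have hzero : ∀ {x y : ι → ℝ}, (∀ u, 0 < y u) → (∀ u, ∃ l ≤ m, t l = x u / y u) →
        HS (t m) x y = 0 :=
      fun hy hgrid => HS_eq_zero hy fun u => by
        obtain ⟨l, hl, hlu⟩ := hgrid u
        exact hlu ▸ htm l hl
    simp only [hzero hy hgrid, hzero hy' hgrid', sub_self]
  · intro j hj
    rcases j.eq_zero_or_pos with rfl | hj0
    · simp only [ht0, hHS0, sub_self, le_refl]
    · exact sub_nonpos.2 (hHS _ (htpos j hj hj0))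

theorem ConvexOn.Dtheta_le_of_HS_le {ι : Type*} [Fintype ι] {θ : ℝ → ℝ}
    (hθ : ConvexOn ℝ (Set.Ici 0) θ) {x y x' y' : ι → ℝ} (hx : ∀ u, 0 ≤ x u)
    (hx' : ∀ u, 0 ≤ x' u) (hy : ∀ u, 0 < y u) (hy' : ∀ u, 0 < y' u)
    (hsumx : ∑ u, x u = ∑ u, x' u) (hsumy : ∑ u, y u = ∑ u, y' u)
    (hHS : ∀ γ, 0 < γ → HS γ x y ≤ HS γ x' y') : Dtheta θ x y ≤ Dtheta θ x' y' := by
  classical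
  set K : Finset ℝ :=
    insert 0 (univ.image (fun u => x u / y u) ∪ univ.image (fun u => x' u / y' u))
  obtain ⟨t, m, ht, hbij⟩ := K.exists_strictMonoOn_Iic_bijOn (insert_nonempty _ _)
  have hgrid : ∀ k ∈ K, ∃ l ≤ m, t l = k := fun k hk => by
    obtain ⟨l, hl, rfl⟩ := hbij.surjOn hk
    exact ⟨l, hl, rfl⟩
  have ht0 : t 0 = 0 := by
    obtain ⟨l, hl, hl0⟩ := hgrid 0 (mem_insert_self _ _)
    refine le_antisymm (hl0 ▸ ht.monotoneOn (Set.mem_Iic.2 (Nat.zero_le m)) hl (Nat.zero_le l)) ?_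
    have ht0K := hbij.mapsTo (Set.mem_Iic.2 (Nat.zero_le m))
    simp only [K, coe_insert, coe_union, coe_image, coe_univ, Set.image_univ, Set.mem_insert_iff,
      Set.mem_union, Set.mem_range] at ht0K
    rcases ht0K with h | ⟨u, hu⟩ | ⟨u, hu⟩
    exacts [h.ge, hu ▸ div_nonneg (hx u) (hy u).le, hu ▸ div_nonneg (hx' u) (hy' u).le]
  exact hθ.Dtheta_le_of_HS_le_of_grid ht ht0 (fun u => hgrid _ (by simp [K]))
    (fun u => hgrid _ (by simp [K])) hy hy' hsumy (by rw [HS_zero hx, HS_zero hx', hsumx]) hHS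

theorem LocallyMaximin.Dtheta_le {f g : Finset V → ℝ} {θ : ℝ → ℝ} {x y x' y' : V → ℝ}
    (hg : StrictMonoFn g) (hθ : ConvexOn ℝ (Set.Ici 0) θ) (hxy : Allocation f g x y)
    (hlm : LocallyMaximin f g x y) (hxy' : Allocation f g x' y') :
    Dtheta θ x y ≤ Dtheta θ x' y' := by
  have hy := pos_of_memBg hg hxy.2
  refine hθ.Dtheta_le_of_HS_le hxy.1.1 hxy'.1.1 hy (pos_of_memBg hg hxy'.2)
    (by rw [hxy.1.2.1, hxy'.1.2.1]) (by rw [hxy.2.2.1, hxy'.2.2.1]) fun γ hγ => ?_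
  rw [hlm.HS_eq hy hγ]
  exact sub_mul_le_HS hxy' hγ.le _

def transfer {ι : Type*} [DecidableEq ι] (z : ι → ℝ) (u v : ι) (δ : ℝ) : ι → ℝ :=
  z - Pi.single u δ + Pi.single v δ

section Transfer

variable {ι : Type*} [DecidableEq ι] {z : ι → ℝ} {u v w : ι} {δ : ℝ}

theorem transfer_apply_left (huv : u ≠ v) : transfer z u v δ u = z u - δ := by
  simp [transfer, huv]

theorem transfer_apply_right (huv : u ≠ v) : transfer z u v δ v = z v + δ := by
  simp [transfer, huv.symm]

theorem transfer_apply_of_ne (hwu : w ≠ u) (hwv : w ≠ v) : transfer z u v δ w = z w := by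
  simp [transfer, hwu, hwv]

theorem sum_transfer (A : Finset ι) :
    ∑ w ∈ A, transfer z u v δ w =
      ∑ w ∈ A, z w - (if u ∈ A then δ else 0) + (if v ∈ A then δ else 0) := by
  simp only [transfer, Pi.add_apply, Pi.sub_apply, sum_add_distrib, sum_sub_distrib,
    sum_pi_single']

end Transfer

theorem Dtheta_sub_Dtheta {ι : Type*} [Fintype ι] {θ : ℝ → ℝ} {x y x' y' : ι → ℝ} {u v : ι}
    (huv : u ≠ v)
    (hx : ∀ w, w ≠ u → w ≠ v → x' w = x w) (hy : ∀ w, w ≠ u → w ≠ v → y' w = y w) :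
    Dtheta θ x' y' - Dtheta θ x y =
      (perspective θ (x' u) (y' u) + perspective θ (x' v) (y' v)) -
        (perspective θ (x u) (y u) + perspective θ (x v) (y v)) := by
  rw [Dtheta, Dtheta, ← sum_sub_distrib, Fintype.sum_eq_add u v huv fun w hw => by
    rw [hx w hw.1 hw.2, hy w hw.1 hw.2, sub_self]]
  simp only [perspective]
  ring

theorem eventually_forall_add_le {ι : Type*} [Finite ι] {p : ι → Prop} {a b : ι → ℝ}
    (h : ∀ i, p i → a i < b i) : ∀ᶠ δ in 𝓝 (0 : ℝ), ∀ i, p i → a i + δ ≤ b i := by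
  refine Filter.eventually_all.2 fun i => ?_
  by_cases hi : p i
  · filter_upwards [eventually_lt_nhds (sub_pos.2 (h i hi))] with δ hδ _
    linarith
  · exact Filter.Eventually.of_forall fun _ h => absurd h hi

theorem eventually_memBf_transfer {f : Finset V → ℝ} {x : V → ℝ} {u v : V} (hx : memBf f x)
    (hu : 0 < x u) (hslack : ∀ A : Finset V, u ∈ A → v ∉ A → f A < ∑ w ∈ A, x w) :
    ∀ᶠ δ in 𝓝[>] 0, memBf f (transfer x u v δ) := by
  obtain ⟨hx0, hxV, hxA⟩ := hx
  filter_upwards [Ioo_mem_nhdsGT hu,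
    nhdsWithin_le_nhds (eventually_forall_add_le fun A (h : u ∈ A ∧ v ∉ A) => hslack A h.1 h.2)]
    with δ ⟨hδ, hδu⟩ hδA
  refine ⟨fun w => ?_, by simp [sum_transfer, hxV], fun A => ?_⟩
  · simp only [transfer, Pi.add_apply, Pi.sub_apply, Pi.single_apply]
    split_ifs <;> subst_vars <;> linarith [hx0 w]
  · rw [sum_transfer]
    have := hxA A
    by_cases huA : u ∈ A <;> by_cases hvA : v ∈ A <;> simp only [huA, hvA, if_true, if_false]
    all_goals first | linarith | linarith [hδA A ⟨huA, hvA⟩]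

theorem eventually_memBg_transfer {g : Finset V → ℝ} {y : V → ℝ} {u v : V} (hy : memBg g y)
    (hu : 0 < y u) (hslack : ∀ A : Finset V, v ∈ A → u ∉ A → ∑ w ∈ A, y w < g A) :
    ∀ᶠ δ in 𝓝[>] 0, memBg g (transfer y u v δ) := by
  obtain ⟨hy0, hyV, hyA⟩ := hy
  filter_upwards [Ioo_mem_nhdsGT hu,
    nhdsWithin_le_nhds (eventually_forall_add_le fun A (h : v ∈ A ∧ u ∉ A) => hslack A h.1 h.2)]
    with δ ⟨hδ, hδu⟩ hδA
  refine ⟨fun w => ?_, by simp [sum_transfer, hyV], fun A => ?_⟩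
  · simp only [transfer, Pi.add_apply, Pi.sub_apply, Pi.single_apply]
    split_ifs <;> subst_vars <;> linarith [hy0 w]
  · rw [sum_transfer]
    have := hyA A
    by_cases huA : u ∈ A <;> by_cases hvA : v ∈ A <;> simp only [huA, hvA, if_true, if_false]
    all_goals first | linarith | linarith [hδA A ⟨hvA, huA⟩]

section StrictDecrease

variable {θ : ℝ → ℝ} {x y : V → ℝ} {u v : V}

theorem StrictConvexOn.eventually_Dtheta_transfer_num_lt (hθ : StrictConvexOn ℝ (Set.Ici 0) θ)
    (hx : ∀ w, 0 ≤ x w) (hy : ∀ w, 0 < y w) (huv : x v / y v < x u / y u) :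
    ∀ᶠ δ in 𝓝[>] 0, Dtheta θ (transfer x u v δ) y < Dtheta θ x y := by
  have hne : u ≠ v := by rintro rfl; exact lt_irrefl _ huv
  have hord : ∀ᶠ δ in 𝓝 (0 : ℝ), (x v + δ) / y v < (x u - δ) / y u :=
    Tendsto.eventually_lt (Continuous.tendsto' (by fun_prop) 0 _ (by simp))
      (Continuous.tendsto' (by fun_prop) 0 _ (by simp)) huv
  filter_upwards [self_mem_nhdsWithin, nhdsWithin_le_nhds hord] with δ (hδ : 0 < δ) hδord
  rw [← sub_neg, Dtheta_sub_Dtheta hne (fun w => transfer_apply_of_ne) (fun _ _ _ => rfl),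
    transfer_apply_left hne, transfer_apply_right hne, sub_neg]
  exact hθ.perspective_transfer_num_lt (hy u) (hy v) (hx v) hδ hδord.le

theorem StrictConvexOn.eventually_Dtheta_transfer_den_lt (hθ : StrictConvexOn ℝ (Set.Ici 0) θ)
    (hx : ∀ w, 0 ≤ x w) (hy : ∀ w, 0 < y w) (huv : x v / y v < x u / y u) :
    ∀ᶠ δ in 𝓝[>] 0, Dtheta θ x (transfer y v u δ) < Dtheta θ x y := by
  have hne : u ≠ v := by rintro rfl; exact lt_irrefl _ huv
  have hxu : 0 < x u :=
    (div_pos_iff_of_pos_right (hy u)).1 ((div_nonneg (hx v) (hy v).le).trans_lt huv)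
  have hord : ∀ᶠ δ in 𝓝 (0 : ℝ), x v / (y v - δ) < x u / (y u + δ) :=
    Tendsto.eventually_lt
      (tendsto_const_nhds.div (tendsto_const_nhds.sub tendsto_id) (by simpa using (hy v).ne'))
      (tendsto_const_nhds.div (tendsto_const_nhds.add tendsto_id) (by simpa using (hy u).ne'))
      (by simpa using huv)
  filter_upwards [Ioo_mem_nhdsGT (hy v), nhdsWithin_le_nhds hord] with δ ⟨hδ, hδv⟩ hδord
  rw [← sub_neg,
    Dtheta_sub_Dtheta hne (fun _ _ _ => rfl) (fun w hu hv => transfer_apply_of_ne hv hu),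
    transfer_apply_left hne.symm, transfer_apply_right hne.symm, sub_neg]
  exact hθ.perspective_transfer_den_lt hxu (hx v) (hy u) hδ hδv hδord.le

end StrictDecrease

theorem exists_separating_of_notMem {L : Set (Finset V)} (hsup : SupClosed L)
    (hinf : InfClosed L) (hempty : ∅ ∈ L) (huniv : univ ∈ L) {S : Finset V} (hS : S ∉ L) :
    ∃ u ∈ S, ∃ v ∉ S, ∀ A ∈ L, u ∈ A → v ∈ A := by
  by_contra! h
  have hsep : ∀ u v, ∃ A ∈ L, u ∈ S → v ∉ S → u ∈ A ∧ v ∉ A := fun u v => by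
    by_cases huv : u ∈ S ∧ v ∉ S
    · obtain ⟨A, hA, huA, hvA⟩ := h u huv.1 v huv.2
      exact ⟨A, hA, fun _ _ => ⟨huA, hvA⟩⟩
    · exact ⟨univ, huniv, fun hu hv => absurd ⟨hu, hv⟩ huv⟩
  choose A hAL hA using hsep
  have hSeq : S = S.sup fun u => Sᶜ.inf (A u) := by
    ext w
    simp only [Finset.mem_sup, Finset.mem_inf, mem_compl]
    refine ⟨fun hw => ⟨w, hw, fun v hv => (hA w v hw hv).1⟩, fun ⟨u, hu, hw⟩ => ?_⟩
    by_contra hwS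
    exact (hA u w hu hwS).2 (hw w hwS)
  refine hS (hSeq ▸ sup_induction hempty (fun _ h₁ _ h₂ => hsup h₁ h₂) fun u _ => ?_)
  exact inf_induction huniv (fun _ h₁ _ h₂ => hinf h₁ h₂) fun v _ => hAL u v

section TightSets

variable {α : Type*} [DecidableEq α] {f g : Finset α → ℝ} {x y : α → ℝ}

theorem Supermodular.supClosed_and_infClosed_tight (hf : Supermodular f)
    (hx : ∀ A, f A ≤ ∑ v ∈ A, x v) :
    SupClosed {A | f A = ∑ v ∈ A, x v} ∧ InfClosed {A | f A = ∑ v ∈ A, x v} := by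
  have h : ∀ A B : Finset α, f A = ∑ v ∈ A, x v → f B = ∑ v ∈ B, x v →
      f (A ∪ B) = ∑ v ∈ A ∪ B, x v ∧ f (A ∩ B) = ∑ v ∈ A ∩ B, x v := fun A B hA hB => by
    have := hf A B
    have := hx (A ∪ B)
    have := hx (A ∩ B)
    have := sum_union_inter (s₁ := A) (s₂ := B) (f := x)
    constructor <;> linarith
  exact ⟨fun A hA B hB => (h A B hA hB).1, fun A hA B hB => (h A B hA hB).2⟩

theorem Submodular.supClosed_and_infClosed_tight (hg : Submodular g)
    (hy : ∀ A, ∑ v ∈ A, y v ≤ g A) :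
    SupClosed {A | ∑ v ∈ A, y v = g A} ∧ InfClosed {A | ∑ v ∈ A, y v = g A} := by
  have h : ∀ A B : Finset α, ∑ v ∈ A, y v = g A → ∑ v ∈ B, y v = g B →
      ∑ v ∈ A ∪ B, y v = g (A ∪ B) ∧ ∑ v ∈ A ∩ B, y v = g (A ∩ B) := fun A B hA hB => by
    have := hg A B
    have := hy (A ∪ B)
    have := hy (A ∩ B)
    have := sum_union_inter (s₁ := A) (s₂ := B) (f := y)
    constructor <;> linarith
  exact ⟨fun A hA B hB => (h A B hA hB).1, fun A hA B hB => (h A B hA hB).2⟩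

end TightSets

theorem locallyMaximin_of_forall_Dtheta_le {f g : Finset V → ℝ} {θ : ℝ → ℝ} {x y : V → ℝ}
    (hdm : DualModular f g) (hθ : StrictConvexOn ℝ (Set.Ici 0) θ) (hxy : Allocation f g x y)
    (hmin : ∀ x' y' : V → ℝ, Allocation f g x' y' → Dtheta θ x y ≤ Dtheta θ x' y') :
    LocallyMaximin f g x y := by
  obtain ⟨hx, hy⟩ := hxy
  have hy0 := pos_of_memBg hdm.g_strictMono hy
  intro ρ _
  set S := univ.filter fun v => ρ ≤ x v / y v
  have hsep : ∀ u ∈ S, ∀ v ∉ S, x v / y v < x u / y u := fun u hu v hv => by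
    simp only [S, mem_filter, mem_univ, true_and, not_le] at hu hv
    exact hv.trans_le hu
  constructor
  · by_contra hS
    obtain ⟨hsup, hinf⟩ := hdm.f_supermodular.supClosed_and_infClosed_tight hx.2.2
    obtain ⟨u, hu, v, hv, huv⟩ := exists_separating_of_notMem hsup hinf
      (by simp [hdm.f_empty]) hx.2.1.symm (S := S) fun h => hS h.symm
    have hslack A (huA : u ∈ A) (hvA : v ∉ A) : f A < ∑ w ∈ A, x w :=
      (hx.2.2 A).lt_of_ne fun h => hvA (huv A h huA)
    have hxu : 0 < x u := (div_pos_iff_of_pos_right (hy0 u)).1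
      ((div_nonneg (hx.1 v) (hy0 v).le).trans_lt (hsep u hu v hv))
    obtain ⟨δ, hfeas, hlt⟩ := ((eventually_memBf_transfer hx hxu hslack).and
      (hθ.eventually_Dtheta_transfer_num_lt hx.1 hy0 (hsep u hu v hv))).exists
    exact (hmin _ _ ⟨hfeas, hy⟩).not_gt hlt
  · by_contra hS
    obtain ⟨hsup, hinf⟩ := hdm.g_submodular.supClosed_and_infClosed_tight hy.2.2
    obtain ⟨u, hu, v, hv, huv⟩ := exists_separating_of_notMem hsup hinf
      (by simp [hdm.g_empty]) hy.2.1 hS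
    have hslack A (huA : u ∈ A) (hvA : v ∉ A) : ∑ w ∈ A, y w < g A :=
      (hy.2.2 A).lt_of_ne fun h => hvA (huv A h huA)
    obtain ⟨δ, hfeas, hlt⟩ := ((eventually_memBg_transfer hy (hy0 v) hslack).and
      (hθ.eventually_Dtheta_transfer_den_lt hx.1 hy0 (hsep u hu v hv))).exists
    exact (hmin _ _ ⟨hx, hfeas⟩).not_gt hlt
/-- Theorem 1.4: for strictly convex `θ`, an allocation minimizes
`D_θ` iff it is locally maximin; for merely convex `θ`, every locally maximin
allocation is a minimizer. -/
theorem convex_program_iff_locally_maximin (f g : Finset V → ℝ)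
    (hdm : DualModular f g) (θ : ℝ → ℝ) :
    (StrictConvexOn ℝ (Set.Ici 0) θ →
      ∀ x y : V → ℝ, Allocation f g x y →
        ((∀ x' y' : V → ℝ, Allocation f g x' y' → Dtheta θ x y ≤ Dtheta θ x' y') ↔
          LocallyMaximin f g x y)) ∧
    (ConvexOn ℝ (Set.Ici 0) θ →
      ∀ x y : V → ℝ, Allocation f g x y → LocallyMaximin f g x y →
        ∀ x' y' : V → ℝ, Allocation f g x' y' → Dtheta θ x y ≤ Dtheta θ x' y') :=
  ⟨fun hθ _ _ hxy => ⟨locallyMaximin_of_forall_Dtheta_le hdm hθ hxy,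
      fun hlm _ _ => hlm.Dtheta_le hdm.g_strictMono hθ.convexOn hxy⟩,
    fun hθ _ _ hxy hlm _ _ => hlm.Dtheta_le hdm.g_strictMono hθ hxy⟩
end

section
/- Let (V; f, g) be a dual-modular instance with density decomposition V = S₁ ∪ … ∪ S_k, densities ρ_i = ρ(S_i|S_{<i}), and density vector ρ*. Every locally maximin solution (p, q) induces the density vector ρ^{(p,q)} = ρ*. Consequently, for any convex θ : ℝ≥0 → ℝ, all locally maximin solutions have the same objective value Φ_θ(p, q) = D_θ(f^p ‖ g^q) = Σ_{i=1}^k g(S_i|S_{<i}) · θ( f(S_i|S_{<i}) / g(S_i|S_{<i}) ). -/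
open Finset

variable {V : Type*} [Fintype V] [DecidableEq V]

section Aux

set_option linter.unusedSectionVars false

variable {f g : Finset V → ℝ}

lemma telescope_perm (h : Finset V → ℝ) (h0 : h ∅ = 0) (σ : Perms V) (A : Finset V) :
    ∑ u ∈ A, (h (insert u (A.filter fun w => σ w < σ u)) - h (A.filter fun w => σ w < σ u))
      = h A := by
  induction A using Finset.strongInduction with
  | _ A ih =>
    rcases A.eq_empty_or_nonempty with rfl | hne
    · simp [h0]
    obtain ⟨u, hu, hmax⟩ := A.exists_max_image (fun w => σ w) hne
    have herase : A.filter (fun w => σ w < σ u) = A.erase u := by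
      ext w
      simp only [Finset.mem_filter, Finset.mem_erase]
      constructor
      · rintro ⟨hw, hlt⟩
        exact ⟨fun hwu => absurd hlt (by simp [hwu]), hw⟩
      · rintro ⟨hwu, hw⟩
        exact ⟨hw, lt_of_le_of_ne (hmax w hw) (fun hc => hwu (σ.injective hc))⟩
    have key : ∀ v ∈ A.erase u,
        A.filter (fun w => σ w < σ v) = (A.erase u).filter (fun w => σ w < σ v) := by
      intro v hv
      ext w
      simp only [Finset.mem_filter, Finset.mem_erase]
      constructor
      · rintro ⟨hw, hlt⟩
        refine ⟨⟨fun hwu => ?_, hw⟩, hlt⟩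
        subst hwu
        exact absurd (hlt.trans_le (hmax v (Finset.mem_of_mem_erase hv))) (lt_irrefl _)
      · rintro ⟨⟨_, hw⟩, hlt⟩; exact ⟨hw, hlt⟩
    rw [← Finset.add_sum_erase _ _ hu, herase, Finset.insert_erase hu,
      Finset.sum_congr rfl (fun v hv => by rw [key v hv]),
      ih (A.erase u) (Finset.erase_ssubset hu)]
    ring

lemma super_marg (hf : Supermodular f) {B C : Finset V} (hBC : B ⊆ C) {u : V} (hu : u ∉ C) :
    f (insert u B) - f B ≤ f (insert u C) - f C := by
  have h := hf (insert u B) C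
  have h1 : insert u B ∩ C = B := by
    ext w
    simp only [Finset.mem_inter, Finset.mem_insert]
    constructor
    · rintro ⟨hw | hw, hwC⟩
      · exact absurd (hw ▸ hwC) hu
      · exact hw
    · intro hw; exact ⟨Or.inr hw, hBC hw⟩
  have h2 : insert u B ∪ C = insert u C := by
    rw [Finset.insert_union, Finset.union_eq_right.mpr hBC]
  rw [h1, h2] at h
  linarith

lemma sub_marg (hg : Submodular g) {B C : Finset V} (hBC : B ⊆ C) {u : V} (hu : u ∉ C) :
    g (insert u C) - g C ≤ g (insert u B) - g B := by
  have h := hg (insert u B) C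
  have h1 : insert u B ∩ C = B := by
    ext w
    simp only [Finset.mem_inter, Finset.mem_insert]
    constructor
    · rintro ⟨hw | hw, hwC⟩
      · exact absurd (hw ▸ hwC) hu
      · exact hw
    · intro hw; exact ⟨Or.inr hw, hBC hw⟩
  have h2 : insert u B ∪ C = insert u C := by
    rw [Finset.insert_union, Finset.union_eq_right.mpr hBC]
  rw [h1, h2] at h
  linarith

lemma base_f (hf : Supermodular f) (h0 : f ∅ = 0) (σ : Perms V) (A : Finset V) :
    f A ≤ ∑ u ∈ A, permVal f σ u := by
  rw [← telescope_perm f h0 σ A]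
  refine Finset.sum_le_sum fun u hu => ?_
  exact super_marg hf (fun w hw => by
      simp only [Finset.mem_filter] at hw ⊢
      exact ⟨Finset.mem_univ _, hw.2⟩)
    (by simp)

lemma base_g (hg : Submodular g) (h0 : g ∅ = 0) (σ : Perms V) (A : Finset V) :
    ∑ u ∈ A, permVal g σ u ≤ g A := by
  rw [← telescope_perm g h0 σ A]
  refine Finset.sum_le_sum fun u hu => ?_
  exact sub_marg hg (fun w hw => by
      simp only [Finset.mem_filter] at hw ⊢
      exact ⟨Finset.mem_univ _, hw.2⟩)
    (by simp)

lemma prefix_val (h : Finset V → ℝ) (h0 : h ∅ = 0) (σ : Perms V) (A : Finset V)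
    (hcl : ∀ u ∈ A, ∀ w ∉ A, σ u < σ w) :
    ∑ u ∈ A, permVal h σ u = h A := by
  rw [← telescope_perm h h0 σ A]
  refine Finset.sum_congr rfl fun u hu => ?_
  have : (Finset.univ.filter fun w => σ w < σ u) = A.filter fun w => σ w < σ u := by
    ext w
    simp only [Finset.mem_filter, Finset.mem_univ, true_and]
    refine ⟨fun hw => ⟨?_, hw⟩, fun hw => hw.2⟩
    by_contra hwA
    exact absurd (hw.trans (hcl u hu w hwA)) (lt_irrefl _)
  rw [permVal, this]

end Aux

section Aux2

set_option linter.unusedSectionVars false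

variable {f g : Finset V → ℝ} {p q : Perms V → ℝ}

lemma sum_distVal (h : Finset V → ℝ) (p : Perms V → ℝ) (A : Finset V) :
    ∑ v ∈ A, distVal h p v = ∑ σ : Perms V, p σ * ∑ v ∈ A, permVal h σ v := by
  simp only [distVal, Finset.mul_sum]
  rw [Finset.sum_comm]

lemma dist_sum_ge (hf : Supermodular f) (h0 : f ∅ = 0) (hp : IsDist p) (A : Finset V) :
    f A ≤ ∑ v ∈ A, distVal f p v := by
  rw [sum_distVal]
  calc f A = ∑ σ : Perms V, p σ * f A := by rw [← Finset.sum_mul, hp.2, one_mul]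
    _ ≤ _ := Finset.sum_le_sum fun σ _ =>
        mul_le_mul_of_nonneg_left (base_f hf h0 σ A) (hp.1 σ)

lemma dist_sum_le (hg : Submodular g) (h0 : g ∅ = 0) (hq : IsDist q) (A : Finset V) :
    ∑ v ∈ A, distVal g q v ≤ g A := by
  rw [sum_distVal]
  calc ∑ σ : Perms V, q σ * ∑ v ∈ A, permVal g σ v
      ≤ ∑ σ : Perms V, q σ * g A := Finset.sum_le_sum fun σ _ =>
        mul_le_mul_of_nonneg_left (base_g hg h0 σ A) (hq.1 σ)
    _ = g A := by rw [← Finset.sum_mul, hq.2, one_mul]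

lemma dist_sum_eq (h : Finset V → ℝ) (h0 : h ∅ = 0) (hp : IsDist p) (A : Finset V)
    (hcl : ∀ σ : Perms V, 0 < p σ → ∀ u ∈ A, ∀ w ∉ A, σ u < σ w) :
    ∑ v ∈ A, distVal h p v = h A := by
  rw [sum_distVal]
  have : ∀ σ ∈ (Finset.univ : Finset (Perms V)),
      p σ * ∑ v ∈ A, permVal h σ v = p σ * h A := by
    intro σ _
    rcases (hp.1 σ).eq_or_lt with h' | h'
    · rw [← h', zero_mul, zero_mul]
    · rw [prefix_val h h0 σ A (hcl σ h')]
  rw [Finset.sum_congr rfl this, ← Finset.sum_mul, hp.2, one_mul]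

lemma distVal_g_pos (hg : StrictMonoFn g) (hq : IsDist q) (v : V) : 0 < distVal g q v := by
  obtain ⟨σ0, hσ0⟩ : ∃ σ, 0 < q σ := by
    by_contra hc
    push_neg at hc
    have hz : ∀ σ : Perms V, q σ = 0 := fun σ => le_antisymm (hc σ) (hq.1 σ)
    have h1 := hq.2
    rw [Finset.sum_congr rfl (fun σ _ => hz σ), Finset.sum_const, smul_zero] at h1
    norm_num at h1
  refine Finset.sum_pos' (fun σ _ => mul_nonneg (hq.1 σ) ?_) ⟨σ0, Finset.mem_univ _, ?_⟩
  · exact le_of_lt (sub_pos.mpr (hg _ _ (Finset.ssubset_insert (by simp))))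
  · exact mul_pos hσ0 (sub_pos.mpr (hg _ _ (Finset.ssubset_insert (by simp))))

lemma distVal_f_nonneg (hf : MonotoneFn f) (hp : IsDist p) (v : V) : 0 ≤ distVal f p v :=
  Finset.sum_nonneg fun σ _ => mul_nonneg (hp.1 σ)
    (sub_nonneg.mpr (hf _ _ (Finset.subset_insert _ _)))

end Aux2

section Aux3

set_option linter.unusedSectionVars false

/-- `W n = S₁ ∪ … ∪ S_n`, prefix unions indexed by a natural number. -/
def Wset {k : ℕ} (S : Fin k → Finset V) (n : ℕ) : Finset V :=
  (Finset.univ.filter (fun j : Fin k => (j : ℕ) < n)).biUnion S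

lemma Wset_zero {k : ℕ} (S : Fin k → Finset V) : Wset S 0 = ∅ := by
  simp [Wset]

lemma Wset_below {k : ℕ} (S : Fin k → Finset V) (i : Fin k) :
    below S i = Wset S (i : ℕ) := by
  unfold below Wset
  refine congrArg (fun t => Finset.biUnion t S) ?_
  ext j
  simp only [Finset.mem_filter, Finset.mem_univ, true_and, Fin.lt_def]

lemma Wset_succ {k : ℕ} (S : Fin k → Finset V) (i : Fin k) :
    Wset S ((i : ℕ) + 1) = S i ∪ Wset S (i : ℕ) := by
  unfold Wset
  have h : (Finset.univ.filter (fun j : Fin k => (j : ℕ) < (i : ℕ) + 1))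
      = insert i (Finset.univ.filter (fun j : Fin k => (j : ℕ) < (i : ℕ))) := by
    ext j
    simp only [Finset.mem_filter, Finset.mem_univ, true_and, Finset.mem_insert,
      Nat.lt_succ_iff, le_iff_lt_or_eq, Fin.ext_iff]
    tauto
  rw [h, Finset.biUnion_insert]

lemma Wset_top {k : ℕ} (S : Fin k → Finset V) : Wset S k = Finset.univ.biUnion S := by
  unfold Wset; congr 1; ext j; simp [j.isLt]

lemma Wset_mem {k : ℕ} {S : Fin k → Finset V} {n : ℕ} {v : V} (hv : v ∈ Wset S n) :
    ∃ j : Fin k, (j : ℕ) < n ∧ v ∈ S j := by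
  obtain ⟨j, hj, hvj⟩ := Finset.mem_biUnion.mp hv
  exact ⟨j, (Finset.mem_filter.mp hj).2, hvj⟩

end Aux3

section Aux4

set_option linter.unusedSectionVars false

lemma main_induction {f g : Finset V → ℝ} (hdm : DualModular f g) {k : ℕ}
    (S : Fin k → Finset V) (hdec : IsDensityDecomposition f g S)
    (p q : Perms V → ℝ) (hp : IsDist p) (hq : IsDist q)
    (hlm : LocallyMaximinSol f g p q) :
    ∀ n : ℕ, n ≤ k →
      (∑ v ∈ Wset S n, distVal f p v = f (Wset S n)) ∧
      (∑ v ∈ Wset S n, distVal g q v = g (Wset S n)) ∧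
      (∀ j : Fin k, (j : ℕ) < n → ∀ v ∈ S j,
        solDensity f g p q v = decompDensity f g S j) ∧
      (∀ j : Fin k, (j : ℕ) < n → ∀ v, v ∉ Wset S n →
        solDensity f g p q v < decompDensity f g S j) := by
  have hypos : ∀ v, 0 < distVal g q v := distVal_g_pos hdm.g_strictMono hq
  have hxnn : ∀ v, 0 ≤ distVal f p v := distVal_f_nonneg hdm.f_mono hp
  have hlnn : ∀ v, 0 ≤ solDensity f g p q v := fun v => div_nonneg (hxnn v) (hypos v).le
  have hxy : ∀ v, distVal f p v = solDensity f g p q v * distVal g q v := fun v =>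
    (div_mul_cancel₀ _ (hypos v).ne').symm
  intro n
  induction n with
  | zero =>
    intro _
    refine ⟨?_, ?_, ?_, ?_⟩ <;>
      simp [Wset_zero, hdm.f_empty, hdm.g_empty]
  | succ n ih =>
    intro hn1
    have hnk : n < k := hn1
    obtain ⟨ihf, ihg, ihd, ihlt⟩ := ih hnk.le
    set i : Fin k := ⟨n, hnk⟩ with hidef
    set P : Finset V := Wset S n with hPdef
    have hbelow : below S i = P := Wset_below S i
    have hSiP : Disjoint (S i) P := hbelow ▸ hdec.disj i
    have hSiR : ∀ v ∈ S i, v ∉ P := fun v hv =>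
      Finset.disjoint_left.mp hSiP hv
    -- the maximizer of the density over V \ P
    have hRne : ((Finset.univ : Finset V) \ P).Nonempty := by
      obtain ⟨v, hv⟩ := hdec.nonempty i
      exact ⟨v, Finset.mem_sdiff.mpr ⟨Finset.mem_univ _, hSiR v hv⟩⟩
    obtain ⟨w0, hw0R, hmax⟩ :=
      ((Finset.univ : Finset V) \ P).exists_max_image (solDensity f g p q) hRne
    set t : ℝ := solDensity f g p q w0 with htdef
    have hmax' : ∀ v, v ∉ P → solDensity f g p q v ≤ t := fun v hv =>
      hmax v (Finset.mem_sdiff.mpr ⟨Finset.mem_univ _, hv⟩)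
    have hw0P : w0 ∉ P := (Finset.mem_sdiff.mp hw0R).2
    set A : Finset V := Finset.univ.filter (fun v => t ≤ solDensity f g p q v) with hAdef
    have hmemA : ∀ v, v ∈ A ↔ t ≤ solDensity f g p q v := by
      intro v; simp [hAdef]
    -- P ⊆ A
    have hPA : P ⊆ A := by
      intro v hv
      obtain ⟨j, hjn, hvj⟩ := Wset_mem hv
      have h1 : solDensity f g p q v = decompDensity f g S j := ihd j hjn v hvj
      have h2 : t < decompDensity f g S j := ihlt j hjn w0 hw0P
      exact (hmemA v).mpr (by linarith)
    -- A is a closed prefix set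
    have hclosed : ∀ σ : Perms V, (0 < p σ ∨ 0 < q σ) →
        ∀ u ∈ A, ∀ w ∉ A, σ u < σ w := by
      intro σ hσ u hu w hw
      have h1 : t ≤ solDensity f g p q u := (hmemA u).mp hu
      have h2 : solDensity f g p q w < t := lt_of_not_ge (fun h => hw ((hmemA w).mpr h))
      exact hlm u w (lt_of_lt_of_le h2 h1) σ hσ
    have hxA : ∑ v ∈ A, distVal f p v = f A :=
      dist_sum_eq f hdm.f_empty hp A (fun σ hσ => hclosed σ (Or.inl hσ))
    have hyA : ∑ v ∈ A, distVal g q v = g A :=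
      dist_sum_eq g hdm.g_empty hq A (fun σ hσ => hclosed σ (Or.inr hσ))
    set C : Finset V := A \ P with hCdef
    have hCP : C ∪ P = A := Finset.sdiff_union_of_subset hPA
    have hCdisjP : Disjoint C P := Finset.sdiff_disjoint
    have hw0A : w0 ∈ A := (hmemA w0).mpr le_rfl
    have hw0C : w0 ∈ C := Finset.mem_sdiff.mpr ⟨hw0A, hw0P⟩
    have hCne : C.Nonempty := ⟨w0, hw0C⟩
    have hCt : ∀ v ∈ C, solDensity f g p q v = t := by
      intro v hv
      obtain ⟨hvA, hvP⟩ := Finset.mem_sdiff.mp hv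
      exact le_antisymm (hmax' v hvP) ((hmemA v).mp hvA)
    have hsumx : ∑ v ∈ C, distVal f p v + ∑ v ∈ P, distVal f p v = f A := by
      rw [← Finset.sum_union hCdisjP, hCP]; exact hxA
    have hsumy : ∑ v ∈ C, distVal g q v + ∑ v ∈ P, distVal g q v = g A := by
      rw [← Finset.sum_union hCdisjP, hCP]; exact hyA
    have hxC : ∑ v ∈ C, distVal f p v = f (C ∪ P) - f P := by
      rw [hCP]; rw [ihf] at hsumx; linarith
    have hyC : ∑ v ∈ C, distVal g q v = g (C ∪ P) - g P := by
      rw [hCP]; rw [ihg] at hsumy; linarith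
    have hyCpos : 0 < ∑ v ∈ C, distVal g q v :=
      Finset.sum_pos (fun v _ => hypos v) hCne
    have hxCt : ∑ v ∈ C, distVal f p v = t * ∑ v ∈ C, distVal g q v := by
      rw [Finset.mul_sum]
      exact Finset.sum_congr rfl fun v hv => by rw [hxy v, hCt v hv]
    have hmdC : margDensity f g C P = t := by
      rw [margDensity, marginal, marginal, ← hxC, ← hyC, hxCt,
        mul_div_assoc, div_self hyCpos.ne', mul_one]
    have hCdisjB : Disjoint C (below S i) := hbelow ▸ hCdisjP
    have ht_le : t ≤ decompDensity f g S i := by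
      have := hdec.maxDensity i C hCne hCdisjB
      rwa [hbelow, hmdC] at this
    -- now the other direction: ρ_i ≤ t
    have hgpos : 0 < g (S i ∪ P) - g P := by
      obtain ⟨v, hv⟩ := hdec.nonempty i
      refine sub_pos.mpr (hdm.g_strictMono P (S i ∪ P) ?_)
      rw [Finset.ssubset_iff_of_subset Finset.subset_union_right]
      exact ⟨v, Finset.mem_union_left _ hv, hSiR v hv⟩
    have hfS : f (S i ∪ P) ≤ ∑ v ∈ S i, distVal f p v + f P := by
      have h1 := dist_sum_ge hdm.f_supermodular hdm.f_empty hp (S i ∪ P)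
      rw [Finset.sum_union hSiP, ihf] at h1
      exact h1
    have hyS : ∑ v ∈ S i, distVal g q v ≤ g (S i ∪ P) - g P := by
      have h1 := dist_sum_le hdm.g_submodular hdm.g_empty hq (S i ∪ P)
      rw [Finset.sum_union hSiP, ihg] at h1
      linarith
    have hySnn : 0 ≤ ∑ v ∈ S i, distVal g q v :=
      Finset.sum_nonneg fun v _ => (hypos v).le
    have hxS : ∑ v ∈ S i, distVal f p v ≤ t * ∑ v ∈ S i, distVal g q v := by
      rw [Finset.mul_sum]
      refine Finset.sum_le_sum fun v hv => ?_
      rw [hxy v]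
      exact mul_le_mul_of_nonneg_right (hmax' v (hSiR v hv)) (hypos v).le
    have htnn : 0 ≤ t := hlnn w0
    have hρdef : decompDensity f g S i = (f (S i ∪ P) - f P) / (g (S i ∪ P) - g P) := by
      rw [decompDensity, margDensity, marginal, marginal, hbelow]
    have hρ_le : decompDensity f g S i ≤ t := by
      rw [hρdef, div_le_iff₀ hgpos]
      have : t * ∑ v ∈ S i, distVal g q v ≤ t * (g (S i ∪ P) - g P) :=
        mul_le_mul_of_nonneg_left hyS htnn
      linarith
    have hteq : t = decompDensity f g S i := le_antisymm ht_le hρ_le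
    have hCSi : C ⊆ S i := by
      refine hdec.maximal i C hCne hCdisjB ?_
      have hrfl : margDensity f g (S i) (below S i) = decompDensity f g S i := rfl
      rw [hrfl, hbelow, hmdC]
      exact hρ_le
    have hSit : ∀ v ∈ S i, solDensity f g p q v = t := by
      by_contra hcon
      push_neg at hcon
      obtain ⟨v0, hv0, hv0t⟩ := hcon
      have hv0lt : solDensity f g p q v0 < t :=
        lt_of_le_of_ne (hmax' v0 (hSiR v0 hv0)) hv0t
      have hstrict : ∑ v ∈ S i, distVal f p v < t * ∑ v ∈ S i, distVal g q v := by
        rw [Finset.mul_sum]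
        refine Finset.sum_lt_sum (fun v hv => ?_) ⟨v0, hv0, ?_⟩
        · rw [hxy v]
          exact mul_le_mul_of_nonneg_right (hmax' v (hSiR v hv)) (hypos v).le
        · rw [hxy v0]
          exact mul_lt_mul_of_pos_right hv0lt (hypos v0)
      have h2 : t * ∑ v ∈ S i, distVal g q v ≤ t * (g (S i ∪ P) - g P) :=
        mul_le_mul_of_nonneg_left hyS htnn
      have h3 : f (S i ∪ P) - f P < t * (g (S i ∪ P) - g P) := by linarith
      have h4 : decompDensity f g S i < t := by
        rw [hρdef, div_lt_iff₀ hgpos]; linarith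
      exact absurd (hteq ▸ h4) (lt_irrefl _)
    have hSiC : S i ⊆ C := by
      intro v hv
      refine Finset.mem_sdiff.mpr ⟨(hmemA v).mpr ?_, hSiR v hv⟩
      rw [hSit v hv]
    have hCeq : C = S i := subset_antisymm hCSi hSiC
    have hW1 : Wset S (n + 1) = A := by
      have h := Wset_succ S i
      rw [hidef] at h
      rw [h, ← hPdef, ← hCeq, hCP]
    refine ⟨?_, ?_, ?_, ?_⟩
    · rw [hW1]; exact hxA
    · rw [hW1]; exact hyA
    · intro j hj v hv
      rcases Nat.lt_succ_iff_lt_or_eq.mp hj with hj' | hj'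
      · exact ihd j hj' v hv
      · have hji : j = i := Fin.ext hj'
        subst hji
        rw [hSit v hv, hteq]
    · intro j hj v hvn
      rw [hW1] at hvn
      have hvt : solDensity f g p q v < t :=
        lt_of_not_ge (fun h => hvn ((hmemA v).mpr h))
      rcases Nat.lt_succ_iff_lt_or_eq.mp hj with hj' | hj'
      · exact ihlt j hj' v (fun hvP => hvn (hPA hvP))
      · have hji : j = i := Fin.ext hj'
        subst hji
        rwa [← hteq]

end Aux4
/-- Lemma 3.2: every locally maximin solution induces the density
vector of the density decomposition, and hence all locally maximin solutions attain
the same objective value `Σ_i g(S_i|S_{<i})·θ(ρ_i)` for any convex `θ`. -/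
theorem locally_maximin_gives_density_decomposition (f g : Finset V → ℝ)
    (hdm : DualModular f g) {k : ℕ} (S : Fin k → Finset V)
    (hdec : IsDensityDecomposition f g S)
    (ρstar : V → ℝ) (hρ : ∀ i : Fin k, ∀ v ∈ S i, ρstar v = decompDensity f g S i)
    (p q : Perms V → ℝ) (hp : IsDist p) (hq : IsDist q)
    (hlm : LocallyMaximinSol f g p q) :
    (∀ v : V, solDensity f g p q v = ρstar v) ∧
    (∀ θ : ℝ → ℝ, ConvexOn ℝ (Set.Ici 0) θ →
      Phi θ f g p q =
        ∑ i : Fin k, marginal g (S i) (below S i) * θ (decompDensity f g S i)) := by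
  have hdens : ∀ i : Fin k, ∀ v ∈ S i, solDensity f g p q v = decompDensity f g S i :=
    fun i v hv =>
      (main_induction hdm S hdec p q hp hq hlm k le_rfl).2.2.1 i i.isLt v hv
  have hcover : ∀ v : V, ∃ i : Fin k, v ∈ S i := by
    intro v
    have hv : v ∈ Finset.univ.biUnion S := by
      rw [hdec.cover]; exact Finset.mem_univ v
    obtain ⟨i, _, h⟩ := Finset.mem_biUnion.mp hv
    exact ⟨i, h⟩
  have hdisjSS : ((Finset.univ : Finset (Fin k)) : Set (Fin k)).PairwiseDisjoint S := by
    intro a _ b _ hab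
    rcases lt_or_gt_of_ne hab with h | h
    · have hsub : S a ⊆ below S b :=
        Finset.subset_biUnion_of_mem S (by simp [below, h])
      exact ((hdec.disj b).mono_right hsub).symm
    · have hsub : S b ⊆ below S a :=
        Finset.subset_biUnion_of_mem S (by simp [below, h])
      exact (hdec.disj a).mono_right hsub
  constructor
  · intro v
    obtain ⟨i, hvi⟩ := hcover v
    rw [hdens i v hvi, ← hρ i v hvi]
  · intro θ _
    have hdisjW : ∀ i : Fin k, Disjoint (S i) (Wset S (i : ℕ)) := by
      intro i
      have := hdec.disj i
      rwa [Wset_below S i] at this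
    have hysum : ∀ i : Fin k, ∑ v ∈ S i, distVal g q v = marginal g (S i) (below S i) := by
      intro i
      have h1 := (main_induction hdm S hdec p q hp hq hlm ((i : ℕ) + 1) i.isLt).2.1
      have h2 := (main_induction hdm S hdec p q hp hq hlm (i : ℕ) i.isLt.le).2.1
      rw [Wset_succ S i, Finset.sum_union (hdisjW i), h2] at h1
      rw [marginal, Wset_below S i]
      linarith
    have hphi : Phi θ f g p q
        = ∑ u ∈ Finset.univ.biUnion S, distVal g q u * θ (solDensity f g p q u) := by
      rw [hdec.cover]; rfl
    rw [hphi, Finset.sum_biUnion hdisjSS]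
    refine Finset.sum_congr rfl fun i _ => ?_
    have : ∀ v ∈ S i, distVal g q v * θ (solDensity f g p q v)
        = distVal g q v * θ (decompDensity f g S i) := fun v hv => by
      rw [hdens i v hv]
    rw [Finset.sum_congr rfl this, ← Finset.sum_mul, hysum i]
end

section
/- Let (V; f, g) be a dual-modular instance in which both f and g are strictly monotone. Define the complementary instance (V; ḡ, f̄) by ḡ(S) = g(V) − g(V \ S) and f̄(S) = f(V) − f(V \ S); then ḡ is monotone and supermodular, f̄ is strictly monotone and submodular, and the density vectors ρ* of (V; f, g) and ρ̄* of (V; ḡ, f̄) satisfy ρ*(u) · ρ̄*(u) = 1 for every u ∈ V. -/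
open Finset

variable {V : Type*} [Fintype V] [DecidableEq V]

section Helpers
set_option linter.unusedSectionVars false

lemma mono_of_strict {f : Finset V → ℝ} (hf : StrictMonoFn f) : MonotoneFn f := by
  intro A B hAB
  rcases eq_or_ssubset_of_subset hAB with h | h
  · rw [h]
  · exact (hf A B h).le

lemma marg_nonneg {f : Finset V → ℝ} (hf : MonotoneFn f) (T A : Finset V) :
    0 ≤ marginal f T A :=
  sub_nonneg.2 (hf A (T ∪ A) subset_union_right)

lemma marg_pos {f : Finset V → ℝ} (hf : StrictMonoFn f) {T A : Finset V}
    (hT : T.Nonempty) (hd : Disjoint T A) : 0 < marginal f T A := by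
  refine sub_pos.2 (hf A (T ∪ A) ?_)
  refine ssubset_iff_of_subset subset_union_right |>.2 ?_
  obtain ⟨x, hx⟩ := hT
  exact ⟨x, mem_union_left _ hx, fun hxA => (disjoint_left.1 hd hx) hxA⟩

lemma marg_mono_super {f : Finset V → ℝ} (hf : Supermodular f) {T A B : Finset V}
    (hAB : A ⊆ B) (hd : Disjoint T B) : marginal f T A ≤ marginal f T B := by
  have h := hf (T ∪ A) B
  have h1 : (T ∪ A) ∩ B = A := by
    rw [union_inter_distrib_right, disjoint_iff_inter_eq_empty.mp hd, inter_eq_left.2 hAB, empty_union]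
  have h2 : T ∪ A ∪ B = T ∪ B := by
    rw [union_assoc, union_eq_right.2 hAB]
  rw [h1, h2] at h
  unfold marginal; linarith

lemma marg_anti_sub {g : Finset V → ℝ} (hg : Submodular g) {T A B : Finset V}
    (hAB : A ⊆ B) (hd : Disjoint T B) : marginal g T B ≤ marginal g T A := by
  have h := hg (T ∪ A) B
  have h1 : (T ∪ A) ∩ B = A := by
    rw [union_inter_distrib_right, disjoint_iff_inter_eq_empty.mp hd, inter_eq_left.2 hAB, empty_union]
  have h2 : T ∪ A ∪ B = T ∪ B := by
    rw [union_assoc, union_eq_right.2 hAB]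
  rw [h1, h2] at h
  unfold marginal; linarith

lemma marg_split (h : Finset V → ℝ) (T U A : Finset V) :
    marginal h (T ∪ U) A = marginal h U A + marginal h T (U ∪ A) := by
  unfold marginal
  rw [union_assoc]
  ring

def prefixUnion {k : ℕ} (S : Fin k → Finset V) (n : ℕ) : Finset V :=
  (Finset.univ.filter (fun j : Fin k => (j : ℕ) < n)).biUnion S

lemma below_eq_prefix {k : ℕ} (S : Fin k → Finset V) (i : Fin k) :
    below S i = prefixUnion S i.val := rfl

lemma prefixUnion_zero {k : ℕ} (S : Fin k → Finset V) : prefixUnion S 0 = ∅ := by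
  simp [prefixUnion]

lemma prefixUnion_succ {k : ℕ} (S : Fin k → Finset V) {n : ℕ} (hn : n < k) :
    prefixUnion S (n + 1) = S ⟨n, hn⟩ ∪ prefixUnion S n := by
  ext x
  simp only [prefixUnion, mem_biUnion, mem_filter, mem_univ, true_and, mem_union]
  constructor
  · rintro ⟨j, hj, hx⟩
    rcases Nat.lt_succ_iff_lt_or_eq.1 hj with h | h
    · exact Or.inr ⟨j, h, hx⟩
    · exact Or.inl (by rwa [show (⟨n, hn⟩ : Fin k) = j from (Fin.ext h.symm)])
  · rintro (hx | ⟨j, hj, hx⟩)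
    · exact ⟨⟨n, hn⟩, Nat.lt_succ_self n, hx⟩
    · exact ⟨j, Nat.lt_succ_of_lt hj, hx⟩

lemma S_subset_prefix {k : ℕ} (S : Fin k → Finset V) {n m : ℕ} (hn : n < k) (hnm : n < m) :
    S ⟨n, hn⟩ ⊆ prefixUnion S m := by
  intro x hx
  simp only [prefixUnion, mem_biUnion, mem_filter, mem_univ, true_and]
  exact ⟨⟨n, hn⟩, hnm, hx⟩

lemma prefixUnion_univ {k : ℕ} (S : Fin k → Finset V)
    (hcov : Finset.univ.biUnion S = (Finset.univ : Finset V)) {n : ℕ} (hn : k ≤ n) :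
    prefixUnion S n = Finset.univ := by
  rw [prefixUnion, filter_true_of_mem (fun j _ => lt_of_lt_of_le j.isLt hn), hcov]

section Decomp

variable {f g : Finset V → ℝ} {k : ℕ} {S : Fin k → Finset V}

lemma gmarg_pos (hdm : DualModular f g) (hdec : IsDensityDecomposition f g S) (i : Fin k) :
    0 < marginal g (S i) (below S i) :=
  marg_pos hdm.g_strictMono (hdec.nonempty i) (hdec.disj i)

lemma fmarg_pos (hfsm : StrictMonoFn f) (hdec : IsDensityDecomposition f g S) (i : Fin k) :
    0 < marginal f (S i) (below S i) :=
  marg_pos hfsm (hdec.nonempty i) (hdec.disj i)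

lemma rho_pos (hdm : DualModular f g) (hfsm : StrictMonoFn f)
    (hdec : IsDensityDecomposition f g S) (i : Fin k) : 0 < decompDensity f g S i :=
  div_pos (fmarg_pos hfsm hdec i) (gmarg_pos hdm hdec i)

lemma fmarg_eq (hdm : DualModular f g) (hdec : IsDensityDecomposition f g S) (i : Fin k) :
    marginal f (S i) (below S i) = decompDensity f g S i * marginal g (S i) (below S i) := by
  rw [decompDensity, margDensity, div_mul_cancel₀ _ (gmarg_pos hdm hdec i).ne']

lemma le_rho (hdm : DualModular f g) (hdec : IsDensityDecomposition f g S) (i : Fin k)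
    {T : Finset V} (hT : T.Nonempty) (hd : Disjoint T (below S i)) :
    marginal f T (below S i) ≤ decompDensity f g S i * marginal g T (below S i) := by
  have h := hdec.maxDensity i T hT hd
  have hg := marg_pos hdm.g_strictMono hT hd
  rw [margDensity] at h
  rw [decompDensity]
  exact (div_le_iff₀ hg).1 h

lemma subset_of_ge (hdm : DualModular f g) (hdec : IsDensityDecomposition f g S) (i : Fin k)
    {T : Finset V} (hT : T.Nonempty) (hd : Disjoint T (below S i))
    (hge : decompDensity f g S i * marginal g T (below S i) ≤ marginal f T (below S i)) :
    T ⊆ S i := by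
  have hg := marg_pos hdm.g_strictMono hT hd
  refine hdec.maximal i T hT hd ?_
  rw [decompDensity] at hge
  show margDensity f g (S i) (below S i) ≤ marginal f T (below S i) / marginal g T (below S i)
  exact (le_div_iff₀ hg).2 hge

lemma rho_succ_lt (hdm : DualModular f g) (hdec : IsDensityDecomposition f g S)
    {n : ℕ} (hn1 : n + 1 < k) :
    decompDensity f g S ⟨n + 1, hn1⟩ < decompDensity f g S ⟨n, by omega⟩ := by
  by_contra hle
  push_neg at hle
  set i : Fin k := ⟨n, by omega⟩ with hi
  set i1 : Fin k := ⟨n + 1, hn1⟩ with hi1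
  have hB : below S i1 = S i ∪ below S i := by
    rw [below_eq_prefix, below_eq_prefix]
    exact prefixUnion_succ S (by omega)
  have hd1 : Disjoint (S i1) (S i ∪ below S i) := hB ▸ hdec.disj i1
  have hdT : Disjoint (S i1 ∪ S i) (below S i) :=
    disjoint_union_left.2 ⟨(disjoint_union_right.1 hd1).2, hdec.disj i⟩
  have hsf := marg_split f (S i1) (S i) (below S i)
  have hsg := marg_split g (S i1) (S i) (below S i)
  have hfe := fmarg_eq hdm hdec i
  have hfe1 := fmarg_eq hdm hdec i1
  rw [hB] at hfe1
  have hg1pos : 0 < marginal g (S i1) (S i ∪ below S i) := by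
    have := gmarg_pos hdm hdec i1
    rwa [hB] at this
  have key : decompDensity f g S i * marginal g (S i1 ∪ S i) (below S i) ≤
      marginal f (S i1 ∪ S i) (below S i) := by
    rw [hsf, hsg]
    have : decompDensity f g S i * marginal g (S i1) (S i ∪ below S i) ≤
        decompDensity f g S i1 * marginal g (S i1) (S i ∪ below S i) :=
      mul_le_mul_of_nonneg_right hle hg1pos.le
    rw [mul_add]
    linarith
  obtain ⟨x, hx⟩ := hdec.nonempty i1
  have hsub := subset_of_ge hdm hdec i ⟨x, mem_union_left _ hx⟩ hdT key
  exact disjoint_left.1 (disjoint_union_right.1 hd1).1 hx (hsub (mem_union_left _ hx))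

lemma rho_lt (hdm : DualModular f g) (hdec : IsDensityDecomposition f g S) :
    ∀ (n m : ℕ) (hmn : m < n) (hn : n < k) (hm : m < k),
      decompDensity f g S ⟨n, hn⟩ < decompDensity f g S ⟨m, hm⟩ := by
  intro n
  induction n with
  | zero => omega
  | succ p ih =>
    intro m hmn hn hm
    rcases Nat.lt_succ_iff_lt_or_eq.1 hmn with h | h
    · exact (rho_succ_lt hdm hdec hn).trans (ih m h (by omega) hm)
    · subst h
      exact rho_succ_lt hdm hdec hn

end Decomp

section Decomp2

variable {f g : Finset V → ℝ} {k : ℕ} {S : Fin k → Finset V}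

lemma sub_part (hdm : DualModular f g) (hdec : IsDensityDecomposition f g S) (i : Fin k)
    {T : Finset V} (hT : T ⊆ S i) :
    decompDensity f g S i * marginal g T (S i \ T ∪ below S i) ≤
      marginal f T (S i \ T ∪ below S i) := by
  have hsf := marg_split f T (S i \ T) (below S i)
  have hsg := marg_split g T (S i \ T) (below S i)
  rw [union_sdiff_of_subset hT] at hsf hsg
  have hfe := fmarg_eq hdm hdec i
  by_cases hE : (S i \ T).Nonempty
  · have hle := le_rho hdm hdec i hE ((hdec.disj i).mono_left sdiff_subset)
    have h2 : decompDensity f g S i * marginal g (S i) (below S i) =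
        decompDensity f g S i * marginal g (S i \ T) (below S i) +
        decompDensity f g S i * marginal g T (S i \ T ∪ below S i) := by
      rw [hsg]; ring
    linarith
  · have hTS : T = S i :=
      subset_antisymm hT (sdiff_eq_empty_iff_subset.1 (not_nonempty_iff_eq_empty.1 hE))
    rw [hTS, sdiff_self]
    simp only [Finset.bot_eq_empty, empty_union]
    exact hfe.ge

lemma tail_bound (hdm : DualModular f g) (hfsm : StrictMonoFn f)
    (hdec : IsDensityDecomposition f g S) :
    ∀ (j : ℕ) (hj : j < k) (T : Finset V), T ⊆ prefixUnion S (j + 1) → T.Nonempty →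
      (decompDensity f g S ⟨j, hj⟩ * marginal g T (prefixUnion S (j + 1) \ T) ≤
        marginal f T (prefixUnion S (j + 1) \ T)) ∧
      (¬ T ⊆ S ⟨j, hj⟩ →
        decompDensity f g S ⟨j, hj⟩ * marginal g T (prefixUnion S (j + 1) \ T) <
          marginal f T (prefixUnion S (j + 1) \ T)) := by
  intro j
  induction j with
  | zero =>
    intro hj T hTW hTne
    have h0 : prefixUnion S (0 + 1) = S ⟨0, hj⟩ := by
      rw [prefixUnion_succ S hj, prefixUnion_zero, union_empty]
    rw [h0] at hTW ⊢
    have hsub : S ⟨0, hj⟩ \ T ∪ below S ⟨0, hj⟩ = S ⟨0, hj⟩ \ T := by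
      rw [below_eq_prefix]
      show _ ∪ prefixUnion S 0 = _
      rw [prefixUnion_zero, union_empty]
    refine ⟨?_, fun hc => (hc hTW).elim⟩
    have h := sub_part hdm hdec ⟨0, hj⟩ hTW
    rwa [hsub] at h
  | succ j ih =>
    intro hj1 T hTW hTne
    have hj : j < k := by omega
    set i1 : Fin k := ⟨j + 1, hj1⟩ with hi1
    have hWsucc : prefixUnion S (j + 1 + 1) = S i1 ∪ prefixUnion S (j + 1) :=
      prefixUnion_succ S hj1
    have hdisj : Disjoint (S i1) (prefixUnion S (j + 1)) := hdec.disj i1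
    set T1 := T ∩ S i1 with hT1def
    set T0 := T \ S i1 with hT0def
    set A := prefixUnion S (j + 1 + 1) \ T with hAdef
    have hT10 : T1 ∪ T0 = T := by
      rw [hT1def, hT0def]; ext x
      simp only [mem_union, mem_inter, mem_sdiff]; tauto
    have hsf := marg_split f T1 T0 A
    have hsg := marg_split g T1 T0 A
    rw [hT10] at hsf hsg
    have hdTA : Disjoint T A := disjoint_sdiff
    have hA1 : T0 ∪ A = S i1 \ T1 ∪ prefixUnion S (j + 1) := by
      rw [hT0def, hT1def, hAdef]; ext x
      have h1 : x ∈ S i1 → x ∉ prefixUnion S (j + 1) := fun hx => disjoint_left.1 hdisj hx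
      have h2 : x ∈ T → x ∈ S i1 ∨ x ∈ prefixUnion S (j + 1) := by
        intro hx; have := hTW hx; rw [hWsucc, mem_union] at this; exact this
      rw [hWsucc]
      simp only [mem_union, mem_sdiff, mem_inter]
      constructor
      · rintro (⟨hxT, hxS⟩ | ⟨hxW, hxT⟩)
        · rcases h2 hxT with h | h
          · exact (hxS h).elim
          · exact Or.inr h
        · rcases hxW with h | h
          · exact Or.inl ⟨h, fun hc => hxT hc.1⟩
          · exact Or.inr h
      · rintro (⟨hS', hn⟩ | hP)
        · by_cases hxT : x ∈ T
          · exact ((hn ⟨hxT, hS'⟩).elim)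
          · exact Or.inr ⟨Or.inl hS', hxT⟩
        · by_cases hxT : x ∈ T
          · exact Or.inl ⟨hxT, fun hS' => h1 hS' hP⟩
          · exact Or.inr ⟨Or.inr hP, hxT⟩
    have hbT1 : decompDensity f g S i1 * marginal g T1 (T0 ∪ A) ≤ marginal f T1 (T0 ∪ A) := by
      by_cases hne : T1.Nonempty
      · rw [hA1]
        exact sub_part hdm hdec i1 inter_subset_right
      · rw [not_nonempty_iff_eq_empty] at hne
        rw [hne]
        simp [marginal]
    have hbT0 : decompDensity f g S i1 * marginal g T0 A ≤ marginal f T0 A ∧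
        (T0.Nonempty → decompDensity f g S i1 * marginal g T0 A < marginal f T0 A) := by
      by_cases hne : T0.Nonempty
      · have hT0P : T0 ⊆ prefixUnion S (j + 1) := by
          intro x hx
          rw [hT0def, mem_sdiff] at hx
          have := hTW hx.1; rw [hWsucc, mem_union] at this
          tauto
        have hA0sub : prefixUnion S (j + 1) \ T0 ⊆ A := by
          intro x hx
          rw [mem_sdiff] at hx
          rw [hAdef, mem_sdiff, hWsucc]
          refine ⟨mem_union_right _ hx.1, fun hxT => hx.2 ?_⟩
          rw [hT0def, mem_sdiff]
          exact ⟨hxT, fun hxS => disjoint_left.1 hdisj hxS hx.1⟩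
        have hdT0A : Disjoint T0 A := hdTA.mono_left (hT0def ▸ sdiff_subset)
        have hIH := (ih hj T0 hT0P hne).1
        have hf_mono : marginal f T0 (prefixUnion S (j + 1) \ T0) ≤ marginal f T0 A :=
          marg_mono_super hdm.f_supermodular hA0sub hdT0A
        have hg_anti : marginal g T0 A ≤ marginal g T0 (prefixUnion S (j + 1) \ T0) :=
          marg_anti_sub hdm.g_submodular hA0sub hdT0A
        have hgpos : 0 < marginal g T0 A := marg_pos hdm.g_strictMono hne hdT0A
        have hrho : decompDensity f g S i1 < decompDensity f g S ⟨j, hj⟩ :=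
          rho_lt hdm hdec (j + 1) j (by omega) hj1 hj
        have hrpos := rho_pos hdm hfsm hdec (⟨j, hj⟩ : Fin k)
        have hstep1 : decompDensity f g S i1 * marginal g T0 A <
            decompDensity f g S ⟨j, hj⟩ * marginal g T0 A :=
          mul_lt_mul_of_pos_right hrho hgpos
        have hstep2 : decompDensity f g S ⟨j, hj⟩ * marginal g T0 A ≤
            decompDensity f g S ⟨j, hj⟩ * marginal g T0 (prefixUnion S (j + 1) \ T0) :=
          mul_le_mul_of_nonneg_left hg_anti hrpos.le
        exact ⟨by linarith, fun _ => by linarith⟩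
      · rw [not_nonempty_iff_eq_empty] at hne
        rw [hne]
        simp [marginal, hne]
    constructor
    · rw [hsf, hsg, mul_add]
      linarith [hbT1, hbT0.1]
    · intro hnsub
      have hT0ne : T0.Nonempty := by rw [hT0def, sdiff_nonempty]; exact hnsub
      rw [hsf, hsg, mul_add]
      linarith [hbT1, hbT0.2 hT0ne]

end Decomp2

lemma marg_compl (h : Finset V → ℝ) {T A : Finset V} (hd : Disjoint T A) :
    marginal (fun B => h Finset.univ - h (Finset.univ \ B)) T A =
      marginal h T (Finset.univ \ (T ∪ A)) := by
  have hu : T ∪ (Finset.univ \ (T ∪ A)) = Finset.univ \ A := by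
    ext x
    have h1 : x ∈ T → x ∉ A := fun hx => disjoint_left.1 hd hx
    simp only [mem_union, mem_sdiff, mem_univ, true_and]
    tauto
  simp only [marginal]
  rw [hu]
  ring

lemma bar_mono {g : Finset V → ℝ} (hg : MonotoneFn g) :
    MonotoneFn (fun A : Finset V => g Finset.univ - g (Finset.univ \ A)) := by
  intro A B hAB
  have h := hg _ _ (sdiff_subset_sdiff (Subset.refl Finset.univ) hAB)
  simp only
  linarith

lemma bar_strictMono {f : Finset V → ℝ} (hf : StrictMonoFn f) :
    StrictMonoFn (fun A : Finset V => f Finset.univ - f (Finset.univ \ A)) := by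
  intro A B hAB
  have hsub : Finset.univ \ B ⊂ Finset.univ \ A := by
    refine (Finset.ssubset_iff_of_subset (sdiff_subset_sdiff (Subset.refl _) hAB.subset)).2 ?_
    obtain ⟨x, hxB, hxA⟩ := exists_of_ssubset hAB
    exact ⟨x, mem_sdiff.2 ⟨mem_univ x, hxA⟩, fun hc => (mem_sdiff.1 hc).2 hxB⟩
  have h := hf _ _ hsub
  simp only
  linarith

lemma bar_supermodular {g : Finset V → ℝ} (hg : Submodular g) :
    Supermodular (fun A : Finset V => g Finset.univ - g (Finset.univ \ A)) := by
  intro A B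
  have h1 : Finset.univ \ (A ∩ B) = (Finset.univ \ A) ∪ (Finset.univ \ B) := by
    ext x; simp only [mem_sdiff, mem_union, mem_inter, mem_univ, true_and]; tauto
  have h2 : Finset.univ \ (A ∪ B) = (Finset.univ \ A) ∩ (Finset.univ \ B) := by
    ext x; simp only [mem_sdiff, mem_union, mem_inter, mem_univ, true_and]; tauto
  have h := hg (Finset.univ \ A) (Finset.univ \ B)
  simp only
  rw [h1, h2]
  linarith

lemma bar_submodular {f : Finset V → ℝ} (hf : Supermodular f) :
    Submodular (fun A : Finset V => f Finset.univ - f (Finset.univ \ A)) := by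
  intro A B
  have h1 : Finset.univ \ (A ∩ B) = (Finset.univ \ A) ∪ (Finset.univ \ B) := by
    ext x; simp only [mem_sdiff, mem_union, mem_inter, mem_univ, true_and]; tauto
  have h2 : Finset.univ \ (A ∪ B) = (Finset.univ \ A) ∩ (Finset.univ \ B) := by
    ext x; simp only [mem_sdiff, mem_union, mem_inter, mem_univ, true_and]; tauto
  have h := hf (Finset.univ \ A) (Finset.univ \ B)
  simp only
  rw [h1, h2]
  linarith

section MainStep

variable {f g : Finset V → ℝ} {k k' : ℕ} {S : Fin k → Finset V} {S' : Fin k' → Finset V}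

set_option maxHeartbeats 1000000 in
lemma step_main (hdm : DualModular f g) (hfsm : StrictMonoFn f)
    (hdec : IsDensityDecomposition f g S)
    (hdec' : IsDensityDecomposition
      (fun A : Finset V => g Finset.univ - g (Finset.univ \ A))
      (fun A : Finset V => f Finset.univ - f (Finset.univ \ A)) S')
    {n : ℕ} (hn : n < k')
    (hP : prefixUnion S' n = Finset.univ \ prefixUnion S (k - n)) :
    ∃ (hj : k - 1 - n < k),
      S' ⟨n, hn⟩ = S ⟨k - 1 - n, hj⟩ ∧
      decompDensity (fun A : Finset V => g Finset.univ - g (Finset.univ \ A))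
          (fun A : Finset V => f Finset.univ - f (Finset.univ \ A)) S' ⟨n, hn⟩ =
        (decompDensity f g S ⟨k - 1 - n, hj⟩)⁻¹ ∧
      prefixUnion S' (n + 1) = Finset.univ \ prefixUnion S (k - (n + 1)) := by
  set i : Fin k' := ⟨n, hn⟩ with hidef
  have hbel : below S' i = prefixUnion S' n := rfl
  have hAdisj : Disjoint (S' i) (prefixUnion S' n) := hdec'.disj i
  have hnk : n < k := by
    by_contra hge
    push_neg at hge
    have h0 : k - n = 0 := by omega
    rw [h0, prefixUnion_zero, sdiff_empty] at hP
    obtain ⟨x, hx⟩ := hdec'.nonempty i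
    exact disjoint_left.1 hAdisj hx (by rw [hP]; exact mem_univ x)
  have hj : k - 1 - n < k := by omega
  set j : ℕ := k - 1 - n with hjdef
  have hkn : k - n = j + 1 := by omega
  rw [hkn] at hP
  set sj : Fin k := ⟨j, hj⟩ with hsjdef
  have hbelj : below S sj = prefixUnion S j := rfl
  have hWsucc : prefixUnion S (j + 1) = S sj ∪ prefixUnion S j := prefixUnion_succ S hj
  have hdisjSjPj : Disjoint (S sj) (prefixUnion S j) := hdec.disj sj
  have hSjW : S sj ⊆ prefixUnion S (j + 1) := S_subset_prefix S hj (Nat.lt_succ_self j)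
  have hSjA : Disjoint (S sj) (prefixUnion S' n) := by
    rw [disjoint_left]
    intro x hx hx'
    rw [hP, mem_sdiff] at hx'
    exact hx'.2 (hSjW hx)
  have htrans : ∀ T : Finset V, T ⊆ prefixUnion S (j + 1) → Disjoint T (prefixUnion S' n) →
      marginal (fun A : Finset V => g Finset.univ - g (Finset.univ \ A)) T (prefixUnion S' n) =
        marginal g T (prefixUnion S (j + 1) \ T) ∧
      marginal (fun A : Finset V => f Finset.univ - f (Finset.univ \ A)) T (prefixUnion S' n) =
        marginal f T (prefixUnion S (j + 1) \ T) := by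
    intro T hTW hTd
    have hcompl : Finset.univ \ (T ∪ prefixUnion S' n) = prefixUnion S (j + 1) \ T := by
      rw [hP]; ext x
      have h1 : x ∈ T → x ∈ prefixUnion S (j + 1) := fun h => hTW h
      simp only [mem_sdiff, mem_union, mem_univ, true_and]
      tauto
    exact ⟨by rw [marg_compl g hTd, hcompl], by rw [marg_compl f hTd, hcompl]⟩
  have hWmSj : prefixUnion S (j + 1) \ S sj = prefixUnion S j := by
    rw [hWsucc]; ext x
    have h1 : x ∈ S sj → x ∉ prefixUnion S j := fun hx => disjoint_left.1 hdisjSjPj hx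
    simp only [mem_sdiff, mem_union]
    tauto
  have hgm := gmarg_pos hdm hdec sj
  have hfe := fmarg_eq hdm hdec sj
  have hrpos := rho_pos hdm hfsm hdec sj
  have htrj := htrans (S sj) hSjW hSjA
  have hdSj : margDensity (fun A : Finset V => g Finset.univ - g (Finset.univ \ A))
      (fun A : Finset V => f Finset.univ - f (Finset.univ \ A)) (S sj) (prefixUnion S' n) =
      (decompDensity f g S sj)⁻¹ := by
    rw [margDensity, htrj.1, htrj.2, hWmSj, ← hbelj, hfe,
      mul_comm (decompDensity f g S sj) (marginal g (S sj) (below S sj)),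
      ← div_div, div_self hgm.ne', one_div]
  -- the set S' i
  have hTne := hdec'.nonempty i
  have hTd : Disjoint (S' i) (prefixUnion S' n) := hAdisj
  have hTW : S' i ⊆ prefixUnion S (j + 1) := by
    intro x hx
    have hxn : x ∉ prefixUnion S' n := disjoint_left.1 hTd hx
    by_contra hxW
    exact hxn (by rw [hP, mem_sdiff]; exact ⟨mem_univ x, hxW⟩)
  have htrT := htrans (S' i) hTW hTd
  have hdTW : Disjoint (S' i) (prefixUnion S (j + 1) \ S' i) := disjoint_sdiff
  have hfmT : 0 < marginal f (S' i) (prefixUnion S (j + 1) \ S' i) :=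
    marg_pos hfsm hTne hdTW
  have hgmT : 0 < marginal g (S' i) (prefixUnion S (j + 1) \ S' i) :=
    marg_pos hdm.g_strictMono hTne hdTW
  have htb := tail_bound hdm hfsm hdec j hj (S' i) hTW hTne
  have hdT_eq : margDensity (fun A : Finset V => g Finset.univ - g (Finset.univ \ A))
      (fun A : Finset V => f Finset.univ - f (Finset.univ \ A)) (S' i) (prefixUnion S' n) =
      marginal g (S' i) (prefixUnion S (j + 1) \ S' i) /
        marginal f (S' i) (prefixUnion S (j + 1) \ S' i) := by
    rw [margDensity, htrT.1, htrT.2]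
  have hub : margDensity (fun A : Finset V => g Finset.univ - g (Finset.univ \ A))
      (fun A : Finset V => f Finset.univ - f (Finset.univ \ A)) (S' i) (prefixUnion S' n) ≤
      (decompDensity f g S sj)⁻¹ := by
    rw [hdT_eq, inv_eq_one_div, div_le_div_iff₀ hfmT hrpos]
    have hcm := mul_comm (marginal g (S' i) (prefixUnion S (j + 1) \ S' i))
      (decompDensity f g S sj)
    linarith [htb.1]
  have hmax := hdec'.maxDensity i (S sj) (hdec.nonempty sj) hSjA
  rw [hbel, hdSj] at hmax
  have hdval : margDensity (fun A : Finset V => g Finset.univ - g (Finset.univ \ A))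
      (fun A : Finset V => f Finset.univ - f (Finset.univ \ A)) (S' i) (prefixUnion S' n) =
      (decompDensity f g S sj)⁻¹ := le_antisymm hub hmax
  have hcross : marginal f (S' i) (prefixUnion S (j + 1) \ S' i) =
      decompDensity f g S sj * marginal g (S' i) (prefixUnion S (j + 1) \ S' i) := by
    rw [hdT_eq, inv_eq_one_div] at hdval
    field_simp at hdval
    linarith [hdval]
  have hsub1 : S' i ⊆ S sj := by
    by_contra hns
    have := htb.2 hns
    rw [hcross] at this
    exact lt_irrefl _ this
  have hsub2 : S sj ⊆ S' i := by
    refine hdec'.maximal i (S sj) (hdec.nonempty sj) hSjA ?_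
    rw [hbel, hdSj]
    exact hub
  have hSeq : S' i = S sj := subset_antisymm hsub1 hsub2
  refine ⟨hj, hSeq, hdval, ?_⟩
  have h1 : k - (n + 1) = j := by omega
  rw [h1, prefixUnion_succ S' hn, hSeq, hP, ← hWmSj]
  ext x
  have hx1 : x ∈ S sj → x ∈ prefixUnion S (j + 1) := fun h => hSjW h
  simp only [mem_union, mem_sdiff, mem_univ, true_and]
  tauto

lemma main_all (hdm : DualModular f g) (hfsm : StrictMonoFn f)
    (hdec : IsDensityDecomposition f g S)
    (hdec' : IsDensityDecomposition
      (fun A : Finset V => g Finset.univ - g (Finset.univ \ A))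
      (fun A : Finset V => f Finset.univ - f (Finset.univ \ A)) S') :
    ∀ n, n ≤ k' → prefixUnion S' n = Finset.univ \ prefixUnion S (k - n) := by
  intro n
  induction n with
  | zero =>
    intro _
    rw [prefixUnion_zero, Nat.sub_zero, prefixUnion_univ S hdec.cover (le_refl k), sdiff_self,
      Finset.bot_eq_empty]
  | succ n ihn =>
    intro h
    obtain ⟨hj, hS, hdd, hPs⟩ :=
      step_main hdm hfsm hdec hdec' (n := n) (by omega) (ihn (by omega))
    exact hPs

lemma S'_spec (hdm : DualModular f g) (hfsm : StrictMonoFn f)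
    (hdec : IsDensityDecomposition f g S)
    (hdec' : IsDensityDecomposition
      (fun A : Finset V => g Finset.univ - g (Finset.univ \ A))
      (fun A : Finset V => f Finset.univ - f (Finset.univ \ A)) S') (i : Fin k') :
    ∃ hji : k - 1 - i.val < k, S' i = S ⟨k - 1 - i.val, hji⟩ ∧
      decompDensity (fun A : Finset V => g Finset.univ - g (Finset.univ \ A))
          (fun A : Finset V => f Finset.univ - f (Finset.univ \ A)) S' i =
        (decompDensity f g S ⟨k - 1 - i.val, hji⟩)⁻¹ := by
  obtain ⟨hj, h1, h2, -⟩ := step_main hdm hfsm hdec hdec' i.isLt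
    (main_all hdm hfsm hdec hdec' i.val (le_of_lt i.isLt))
  exact ⟨hj, h1, h2⟩

end MainStep

end Helpers

/-- Corollary 1.6: the complementary instance `(V; ḡ, f̄)` with
`ḡ(S) = g(V) − g(V∖S)` and `f̄(S) = f(V) − f(V∖S)` is again dual-modular, and its
density vector is the coordinate-wise reciprocal of that of `(V; f, g)`. -/
theorem reward_cost_symmetry (f g : Finset V → ℝ) (hdm : DualModular f g)
    (hfsm : StrictMonoFn f)
    {k : ℕ} (S : Fin k → Finset V) (hdec : IsDensityDecomposition f g S)
    (ρstar : V → ℝ) (hρ : ∀ i : Fin k, ∀ v ∈ S i, ρstar v = decompDensity f g S i)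
    {k' : ℕ} (S' : Fin k' → Finset V)
    (hdec' : IsDensityDecomposition
      (fun A : Finset V => g Finset.univ - g (Finset.univ \ A))
      (fun A : Finset V => f Finset.univ - f (Finset.univ \ A)) S')
    (ρbar : V → ℝ)
    (hρ' : ∀ i : Fin k', ∀ v ∈ S' i,
      ρbar v = decompDensity
        (fun A : Finset V => g Finset.univ - g (Finset.univ \ A))
        (fun A : Finset V => f Finset.univ - f (Finset.univ \ A)) S' i) :
    MonotoneFn (fun A : Finset V => g Finset.univ - g (Finset.univ \ A)) ∧
    Supermodular (fun A : Finset V => g Finset.univ - g (Finset.univ \ A)) ∧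
    StrictMonoFn (fun A : Finset V => f Finset.univ - f (Finset.univ \ A)) ∧
    Submodular (fun A : Finset V => f Finset.univ - f (Finset.univ \ A)) ∧
    (∀ u : V, ρstar u * ρbar u = 1) := by
  refine ⟨bar_mono (mono_of_strict hdm.g_strictMono), bar_supermodular hdm.g_submodular,
    bar_strictMono hfsm, bar_submodular hdm.f_supermodular, ?_⟩
  intro u
  have hu' : u ∈ Finset.univ.biUnion S' := by rw [hdec'.cover]; exact mem_univ u
  obtain ⟨i, -, hui⟩ := mem_biUnion.1 hu'
  obtain ⟨hj, hSe, hdd⟩ := S'_spec hdm hfsm hdec hdec' i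
  have h1 : ρbar u = (decompDensity f g S ⟨k - 1 - i.val, hj⟩)⁻¹ := by
    rw [hρ' i u hui, hdd]
  have h2 : ρstar u = decompDensity f g S ⟨k - 1 - i.val, hj⟩ := hρ _ u (hSe ▸ hui)
  rw [h1, h2]
  exact mul_inv_cancel₀ (rho_pos hdm hfsm hdec _).ne'
end
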